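/- arXiv:1706.05211 — 5 statements merged into one kernel-verified Lean document; each statement's English description precedes it below -/
import Mathlib

section
/- For every set Ω₀ ⊆ Ω̄ which is relatively open in Ω̄ and satisfies Ω₀ ∩ {d=0} ≠ ∅, one has ∫_{Ω₀} d_x²/d = ∞. -/
open MeasureTheory Set

/-!
Near a zero `c` of `d`, finiteness of `K = ∫ d_x²/d` forces the linear growth
`d x ≤ K (x - c)`, which is incompatible with `∫ 1/d < ∞`. For the growth bound, let `y` be a
maximum point of `d` on `[c, x]` and `z < y` the last zero before it. Then `d > 0` on `(z, y]`,
and integrating the AM-GM bound `|d_x| ≤ (h/2) d_x²/d + d/(2h)` with `h = y - z` over `(z, y]`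
gives `d y ≤ h K / 2 + d y / 2`. A zero at the right end of an interval reduces to one at the
left end by the reflection `x ↦ -x`.
-/

lemma lintegral_inv_ofReal_sub_eq_top {c e : ℝ} (hce : c < e) :
    ∫⁻ x in Ioo c e, (ENNReal.ofReal (x - c))⁻¹ = ⊤ := by
  by_contra hfin
  have hint : IntegrableOn (fun x => (x - c)⁻¹) (Ioo c e) := by
    have hnonneg : ∀ x ∈ Ioo c e, 0 ≤ (x - c)⁻¹ := fun x hx =>
      inv_nonneg.2 (sub_nonneg.2 hx.1.le)
    refine ⟨(measurable_id.sub_const c).inv.aestronglyMeasurable, ?_⟩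
    rw [hasFiniteIntegral_iff_ofReal (ae_restrict_of_forall_mem measurableSet_Ioo hnonneg),
      setLIntegral_congr_fun measurableSet_Ioo
      (fun x hx => ENNReal.ofReal_inv_of_pos (sub_pos.2 hx.1))]
    exact lt_top_iff_ne_top.2 hfin
  have : IntervalIntegrable (fun x => (x - c)⁻¹) volume c e := by
    rw [intervalIntegrable_iff_integrableOn_Ioo_of_le hce.le]
    exact hint
  simp [hce.ne] at this

lemma lintegral_inv_ofReal_eq_top_of_le_mul_sub {d : ℝ → ℝ} {c e K : ℝ} (hce : c < e)
    (hK : 0 ≤ K) (hle : ∀ x ∈ Ioo c e, d x ≤ K * (x - c)) :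
    ∫⁻ x in Ioo c e, (ENNReal.ofReal (d x))⁻¹ = ⊤ := by
  refine top_unique ?_
  calc (⊤ : ENNReal)
      = ∫⁻ x in Ioo c e, (ENNReal.ofReal K)⁻¹ * (ENNReal.ofReal (x - c))⁻¹ := by
        rw [lintegral_const_mul _ (by fun_prop), lintegral_inv_ofReal_sub_eq_top hce,
          ENNReal.mul_top (ENNReal.inv_ne_zero.2 ENNReal.ofReal_ne_top)]
    _ = ∫⁻ x in Ioo c e, (ENNReal.ofReal (K * (x - c)))⁻¹ := by
        congr 1 with x
        rw [ENNReal.ofReal_mul hK,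
          ENNReal.mul_inv (.inr ENNReal.ofReal_ne_top) (.inl ENNReal.ofReal_ne_top)]
    _ ≤ ∫⁻ x in Ioo c e, (ENNReal.ofReal (d x))⁻¹ :=
        setLIntegral_mono' measurableSet_Ioo fun x hx =>
          ENNReal.inv_le_inv.2 (ENNReal.ofReal_le_ofReal (hle x hx))

lemma exists_zero_forall_pos_Ioc {d : ℝ → ℝ} {c y : ℝ} (hcy : c ≤ y)
    (hcont : ContinuousOn d (Icc c y)) (hnonneg : ∀ t ∈ Icc c y, 0 ≤ d t) (hc : d c = 0) :
    ∃ z ∈ Icc c y, d z = 0 ∧ ∀ t ∈ Ioc z y, 0 < d t := by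
  have hcompact : IsCompact (Icc c y ∩ d ⁻¹' {0}) :=
    isCompact_Icc.of_isClosed_subset
      (hcont.preimage_isClosed_of_isClosed isClosed_Icc isClosed_singleton) inter_subset_left
  obtain ⟨z, ⟨hz, hdz⟩, hmax⟩ :=
    hcompact.exists_isGreatest ⟨c, ⟨left_mem_Icc.2 hcy, hc⟩⟩
  refine ⟨z, hz, hdz, fun t ht => ?_⟩
  have htIcc : t ∈ Icc c y := ⟨hz.1.trans ht.1.le, ht.2⟩
  exact (hnonneg t htIcc).lt_of_ne' fun hdt => ht.1.not_ge (hmax ⟨htIcc, hdt⟩)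

lemma abs_le_mul_sq_div_add_div {g D h : ℝ} (hD : 0 < D) (hh : 0 < h) :
    |g| ≤ h / 2 * (g ^ 2 / D) + D / (2 * h) := by
  rw [show h / 2 * (g ^ 2 / D) + D / (2 * h) = ((h * |g|) ^ 2 + D ^ 2) / (2 * h * D) by
    rw [mul_pow, sq_abs]; field_simp, le_div_iff₀ (by positivity)]
  nlinarith [sq_nonneg (h * |g| - D)]

lemma le_mul_sub_of_lintegral_sq_deriv_div_le_of_pos {d : ℝ → ℝ} {z y K : ℝ} (hzy : z < y)
    (hcont : ContinuousOn d (Icc z y)) (hz : d z = 0) (hpos : ∀ t ∈ Ioc z y, 0 < d t)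
    (hmax : ∀ t ∈ Ioc z y, d t ≤ d y) (hdiff : ∀ t ∈ Ioo z y, DifferentiableAt ℝ d t)
    (hK0 : 0 ≤ K)
    (hK : ∫⁻ t in Ioc z y, ENNReal.ofReal (deriv d t ^ 2 / d t) ≤ ENNReal.ofReal K) :
    d y ≤ K * (y - z) := by
  set h := y - z
  have hh : 0 < h := sub_pos.2 hzy
  set q := fun t => deriv d t ^ 2 / d t
  have hq_nonneg : 0 ≤ᵐ[volume.restrict (Ioc z y)] q :=
    ae_restrict_of_forall_mem measurableSet_Ioc fun t ht => div_nonneg (sq_nonneg _) (hpos t ht).le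
  have hq_meas : AEStronglyMeasurable q (volume.restrict (Ioc z y)) :=
    (((measurable_deriv d).pow_const 2).aemeasurable.div
      ((hcont.mono Ioc_subset_Icc_self).aemeasurable measurableSet_Ioc)).aestronglyMeasurable
  have hq_int : IntegrableOn q (Ioc z y) :=
    ⟨hq_meas, (hasFiniteIntegral_iff_ofReal hq_nonneg).2 (hK.trans_lt ENNReal.ofReal_lt_top)⟩
  have hq_le : ∫ t in Ioc z y, q t ≤ K := by
    rw [integral_eq_lintegral_of_nonneg_ae hq_nonneg hq_meas]
    exact ENNReal.toReal_le_of_le_ofReal hK0 hK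
  have hd_int : IntegrableOn d (Ioc z y) := hcont.integrableOn_Icc.mono_set Ioc_subset_Icc_self
  have hd_le : ∫ t in Ioc z y, d t ≤ h * d y := by
    calc ∫ t in Ioc z y, d t ≤ ∫ _ in Ioc z y, d y :=
          setIntegral_mono_on hd_int (integrableOn_const measure_Ioc_lt_top.ne) measurableSet_Ioc
            hmax
      _ = h * d y := by rw [setIntegral_const, Real.volume_real_Ioc_of_le hzy.le, smul_eq_mul]
  have hB_int : IntegrableOn (fun t => h / 2 * q t + d t / (2 * h)) (Ioc z y) :=
    (hq_int.const_mul _).add (hd_int.div_const _)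
  have hB : ∀ t ∈ Ioc z y, |deriv d t| ≤ h / 2 * q t + d t / (2 * h) := fun t ht =>
    abs_le_mul_sq_div_add_div (hpos t ht) hh
  have hg_int : IntegrableOn (deriv d) (Ioc z y) :=
    hB_int.mono' (measurable_deriv d).aestronglyMeasurable
      (ae_restrict_of_forall_mem measurableSet_Ioc hB)
  have hftc : d y = ∫ t in Ioc z y, deriv d t := by
    rw [← intervalIntegral.integral_of_le hzy.le,
      intervalIntegral.integral_eq_sub_of_hasDeriv_right_of_le hzy.le hcont
        (fun t ht => (hdiff t ht).hasDerivAt.hasDerivWithinAt)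
        ((intervalIntegrable_iff_integrableOn_Ioc_of_le hzy.le).2 hg_int), hz, sub_zero]
  have hdy : d y ≤ h / 2 * K + d y / 2 := by
    calc d y = ∫ t in Ioc z y, deriv d t := hftc
      _ ≤ ∫ t in Ioc z y, (h / 2 * q t + d t / (2 * h)) :=
          setIntegral_mono_on hg_int hB_int measurableSet_Ioc fun t ht =>
            (le_abs_self _).trans (hB t ht)
      _ = h / 2 * (∫ t in Ioc z y, q t) + (∫ t in Ioc z y, d t) / (2 * h) := by
          rw [integral_add (hq_int.const_mul _) (hd_int.div_const _), integral_const_mul,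
            integral_div]
      _ ≤ h / 2 * K + h * d y / (2 * h) := by gcongr
      _ = h / 2 * K + d y / 2 := by field_simp
  linarith

lemma le_mul_sub_of_lintegral_sq_deriv_div_le {d : ℝ → ℝ} {c x K : ℝ} (hcx : c ≤ x)
    (hcont : ContinuousOn d (Icc c x)) (hnonneg : ∀ t ∈ Icc c x, 0 ≤ d t) (hc : d c = 0)
    (hdiff : ∀ t ∈ Ioo c x, 0 < d t → DifferentiableAt ℝ d t) (hK0 : 0 ≤ K)
    (hK : ∫⁻ t in Ioc c x, ENNReal.ofReal (deriv d t ^ 2 / d t) ≤ ENNReal.ofReal K) :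
    d x ≤ K * (x - c) := by
  obtain ⟨y, hy, hymax⟩ := isCompact_Icc.exists_isMaxOn ⟨c, left_mem_Icc.2 hcx⟩ hcont
  obtain ⟨z, hz, hdz, hpos⟩ := exists_zero_forall_pos_Ioc hy.1
    (hcont.mono (Icc_subset_Icc_right hy.2)) (fun t ht => hnonneg t ⟨ht.1, ht.2.trans hy.2⟩) hc
  have hsub : Icc z y ⊆ Icc c x := Icc_subset_Icc hz.1 hy.2
  rcases hz.2.eq_or_lt with rfl | hzy
  · calc d x ≤ d z := hymax (right_mem_Icc.2 hcx)
      _ = 0 := hdz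
      _ ≤ K * (x - c) := mul_nonneg hK0 (sub_nonneg.2 hcx)
  · calc d x ≤ d y := hymax (right_mem_Icc.2 hcx)
      _ ≤ K * (y - z) :=
          le_mul_sub_of_lintegral_sq_deriv_div_le_of_pos hzy (hcont.mono hsub) hdz hpos
            (fun t ht => hymax (hsub (Ioc_subset_Icc_self ht)))
            (fun t ht => (hdiff t (Ioo_subset_Ioo hz.1 hy.2 ht)
              (hpos t (Ioo_subset_Ioc_self ht))))
            hK0 ((lintegral_mono_set (Ioc_subset_Ioc hz.1 hy.2)).trans hK)
      _ ≤ K * (x - c) := by gcongr <;> linarith [hz.1, hy.2]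

lemma lintegral_sq_deriv_div_eq_top_of_left_zero {d : ℝ → ℝ} {c e : ℝ} (hce : c < e)
    (hcont : ContinuousOn d (Icc c e)) (hnonneg : ∀ t ∈ Icc c e, 0 ≤ d t) (hc : d c = 0)
    (hdiff : ∀ t ∈ Ioo c e, 0 < d t → DifferentiableAt ℝ d t)
    (hint : ∫⁻ x in Ioo c e, (ENNReal.ofReal (d x))⁻¹ ≠ ⊤) :
    ∫⁻ x in Ioo c e, ENNReal.ofReal (deriv d x ^ 2 / d x) = ⊤ := by
  by_contra hK
  set K := (∫⁻ x in Ioo c e, ENNReal.ofReal (deriv d x ^ 2 / d x)).toReal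
  refine hint (lintegral_inv_ofReal_eq_top_of_le_mul_sub hce (K := K) ENNReal.toReal_nonneg
    fun x hx => ?_)
  exact le_mul_sub_of_lintegral_sq_deriv_div_le hx.1.le (hcont.mono (Icc_subset_Icc_right hx.2.le))
    (fun t ht => hnonneg t ⟨ht.1, ht.2.trans hx.2.le⟩) hc
    (fun t ht => hdiff t ⟨ht.1, ht.2.trans hx.2⟩) ENNReal.toReal_nonneg
    ((lintegral_mono_set (Ioc_subset_Ioo_right hx.2)).trans (ENNReal.ofReal_toReal hK).ge)

lemma setLIntegral_Ioo_comp_neg (f : ℝ → ENNReal) (c e : ℝ) :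
    ∫⁻ x in Ioo (-e) (-c), f (-x) = ∫⁻ x in Ioo c e, f x := by
  simpa using (Measure.measurePreserving_neg (volume : Measure ℝ)).setLIntegral_comp_preimage_emb
    (Homeomorph.neg ℝ).measurableEmbedding f (Ioo c e)

lemma lintegral_sq_deriv_div_eq_top_of_right_zero {d : ℝ → ℝ} {c e : ℝ} (hce : c < e)
    (hcont : ContinuousOn d (Icc c e)) (hnonneg : ∀ t ∈ Icc c e, 0 ≤ d t) (he : d e = 0)
    (hdiff : ∀ t ∈ Ioo c e, 0 < d t → DifferentiableAt ℝ d t)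
    (hint : ∫⁻ x in Ioo c e, (ENNReal.ofReal (d x))⁻¹ ≠ ⊤) :
    ∫⁻ x in Ioo c e, ENNReal.ofReal (deriv d x ^ 2 / d x) = ⊤ := by
  have hneg : ∀ {s t x : ℝ}, x ∈ Icc (-t) (-s) → -x ∈ Icc s t := fun hx =>
    ⟨le_neg.2 hx.2, neg_le.2 hx.1⟩
  have key := lintegral_sq_deriv_div_eq_top_of_left_zero (d := fun x => d (-x)) (neg_lt_neg hce)
    (hcont.comp continuousOn_neg fun x hx => hneg hx) (fun t ht => hnonneg (-t) (hneg ht))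
    (by simpa using he)
    (fun t ht hdt => differentiableAt_comp_neg.2
      (hdiff (-t) ⟨lt_neg.2 ht.2, neg_lt.2 ht.1⟩ hdt))
    (by rwa [setLIntegral_Ioo_comp_neg (fun x => (ENNReal.ofReal (d x))⁻¹)])
  simpa only [deriv_comp_neg, neg_sq, setLIntegral_Ioo_comp_neg
    (fun x => ENNReal.ofReal (deriv d x ^ 2 / d x))] using key

lemma exists_Ioo_subset_of_mem_nhds_of_mem_Icc {a b x₀ : ℝ} {U : Set ℝ} (hab : a < b)
    (hx₀ : x₀ ∈ Icc a b) (hU : U ∈ nhds x₀) :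
    ∃ c e, c < e ∧ a ≤ c ∧ e ≤ b ∧ Ioo c e ⊆ U ∧ (c = x₀ ∨ e = x₀) := by
  rcases hx₀.2.lt_or_eq with hlt | rfl
  · obtain ⟨u, hu, hsub⟩ := exists_Ico_subset_of_mem_nhds hU ⟨b, hlt⟩
    exact ⟨x₀, min u b, lt_min hu hlt, hx₀.1, min_le_right _ _,
      fun t ht => hsub ⟨ht.1.le, ht.2.trans_le (min_le_left _ _)⟩, .inl rfl⟩
  · obtain ⟨l, hl, hsub⟩ := exists_Ioc_subset_of_mem_nhds hU ⟨a, hab⟩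
    exact ⟨max l a, x₀, max_lt hl hab, le_max_right _ _, le_rfl,
      fun t ht => hsub ⟨(le_max_left _ _).trans_lt ht.1, ht.2.le⟩, .inr rfl⟩

lemma differentiableAt_of_contDiffOn_pos {d : ℝ → ℝ} {a b t : ℝ}
    (hcont : ContinuousOn d (Icc a b)) (hC1 : ContDiffOn ℝ 1 d {x ∈ Icc a b | 0 < d x})
    (ht : t ∈ Ioo a b) (hdt : 0 < d t) : DifferentiableAt ℝ d t := by
  have hIcc : Icc a b ∈ nhds t := Icc_mem_nhds ht.1 ht.2
  have hpos : {x ∈ Icc a b | 0 < d x} ∈ nhds t :=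
    Filter.inter_mem hIcc ((hcont.continuousAt hIcc).eventually (lt_mem_nhds hdt))
  exact (hC1.differentiableOn one_ne_zero t (mem_of_mem_nhds hpos)).differentiableAt hpos

/-- Lemma `lem41`: for every relatively open `Ω₀ ⊆ Ω̄` meeting the zero set of `d`,
the integral `∫_{Ω₀} d_x²/d` is infinite. -/
theorem stmt_4
    (a b : ℝ) (hab : a < b)
    (d : ℝ → ℝ)
    (hd_cont : ContinuousOn d (Set.Icc a b))
    (hd_nonneg : ∀ x ∈ Set.Icc a b, 0 ≤ d x)
    (hd_C1 : ContDiffOn ℝ 1 d {x ∈ Set.Icc a b | 0 < d x})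
    (hd_int : (∫⁻ x in Set.Ioo a b, (ENNReal.ofReal (d x))⁻¹) < ⊤) :
    ∀ Ω₀ : Set ℝ, (∃ U : Set ℝ, IsOpen U ∧ Ω₀ = U ∩ Set.Icc a b) →
      (∃ x ∈ Ω₀, d x = 0) →
      (∫⁻ x in Ω₀, ENNReal.ofReal ((deriv d x) ^ 2 / d x)) = ⊤ := by
  rintro Ω₀ ⟨U, hU, rfl⟩ ⟨x₀, ⟨hx₀U, hx₀⟩, hdx₀⟩
  obtain ⟨c, e, hce, hac, heb, hsubU, hend⟩ :=
    exists_Ioo_subset_of_mem_nhds_of_mem_Icc hab hx₀ (hU.mem_nhds hx₀U)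
  have hIcc : Icc c e ⊆ Icc a b := Icc_subset_Icc hac heb
  have hIoo : Ioo c e ⊆ Ioo a b := Ioo_subset_Ioo hac heb
  have hcont := hd_cont.mono hIcc
  have hnonneg : ∀ t ∈ Icc c e, 0 ≤ d t := fun t ht => hd_nonneg t (hIcc ht)
  have hdiff : ∀ t ∈ Ioo c e, 0 < d t → DifferentiableAt ℝ d t := fun t ht =>
    differentiableAt_of_contDiffOn_pos hd_cont hd_C1 (hIoo ht)
  have hint : ∫⁻ x in Ioo c e, (ENNReal.ofReal (d x))⁻¹ ≠ ⊤ :=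
    ((lintegral_mono_set hIoo).trans_lt hd_int).ne
  have htop : ∫⁻ x in Ioo c e, ENNReal.ofReal (deriv d x ^ 2 / d x) = ⊤ := by
    rcases hend with rfl | rfl
    · exact lintegral_sq_deriv_div_eq_top_of_left_zero hce hcont hnonneg hdx₀ hdiff hint
    · exact lintegral_sq_deriv_div_eq_top_of_right_zero hce hcont hnonneg hdx₀ hdiff hint
  exact top_unique <| htop ▸ lintegral_mono_set fun t ht =>
    ⟨hsubU ht, Ioo_subset_Icc_self (hIoo ht)⟩
end

section
/- Suppose w₀ ∈ C⁰(Ω̄) is a nonnegative function satisfying ∫_Ω (d_x²/d) w₀ < ∞. Then w₀(x) = 0 for every x ∈ Ω̄ with d(x) = 0. -/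
/-! If `w₀ x₀ > 0` at a zero `x₀` of `d`, then `w₀ ≥ w₀ x₀ / 2` near `x₀`, so
`∫ d'² / d = 4 ∫ ((√d)')²` is finite near `x₀`. Cauchy–Schwarz for `√d` between `y` and the zero
of `d` nearest to `y` gives `d y ≤ C |y - x₀|`, so `1 / d ≥ 1 / (C |y - x₀|)` is not integrable
near `x₀`, contradicting `∫ 1 / d < ∞`. -/

open MeasureTheory Set
open scoped ENNReal Topology

theorem lintegral_sq_le_measure_univ_mul {α : Type*} [MeasurableSpace α] (μ : Measure α)
    {f : α → ℝ≥0∞} (hf : AEMeasurable f μ) :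
    (∫⁻ a, f a ∂μ) ^ 2 ≤ μ univ * ∫⁻ a, f a ^ 2 ∂μ := by
  have h := ENNReal.lintegral_mul_le_Lp_mul_Lq μ Real.HolderConjugate.two_two aemeasurable_const hf
    (f := 1)
  simp only [Pi.one_apply, one_mul, ENNReal.rpow_two, one_pow, lintegral_const] at h
  calc (∫⁻ a, f a ∂μ) ^ 2 ≤ (μ univ ^ (1 / 2 : ℝ) * (∫⁻ a, f a ^ 2 ∂μ) ^ (1 / 2 : ℝ)) ^ 2 := by
        gcongr
    _ = μ univ * ∫⁻ a, f a ^ 2 ∂μ := by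
        rw [mul_pow, ← ENNReal.rpow_natCast, ← ENNReal.rpow_natCast (_ ^ _), ← ENNReal.rpow_mul,
          ← ENNReal.rpow_mul]
        norm_num

theorem setLIntegral_ofReal_le_inv_mul_setLIntegral_mul {α : Type*} [MeasurableSpace α]
    {μ : Measure α} {s : Set α} (hs : MeasurableSet s) {Q w : α → ℝ} {c : ℝ} (hc : 0 < c)
    (hQ : ∀ x ∈ s, 0 ≤ Q x) (hw : ∀ x ∈ s, c ≤ w x) :
    ∫⁻ x in s, ENNReal.ofReal (Q x) ∂μ ≤
      ENNReal.ofReal c⁻¹ * ∫⁻ x in s, ENNReal.ofReal (Q x * w x) ∂μ := by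
  rw [← lintegral_const_mul' _ _ ENNReal.ofReal_ne_top]
  refine setLIntegral_mono' hs fun x hx ↦ ?_
  rw [← ENNReal.ofReal_mul (inv_nonneg.2 hc.le)]
  refine ENNReal.ofReal_le_ofReal ?_
  calc Q x = c⁻¹ * (Q x * c) := by field_simp
    _ ≤ c⁻¹ * (Q x * w x) := by gcongr; exacts [hQ x hx, hw x hx]

theorem enorm_sub_le_lintegral_enorm_deriv {F : ℝ → ℝ} {z y : ℝ} (hzy : z ≤ y)
    (hF : ContinuousOn F (Icc z y)) (hF' : DifferentiableOn ℝ F (Ioo z y)) :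
    ‖F y - F z‖ₑ ≤ ∫⁻ s in Ioo z y, ‖deriv F s‖ₑ := by
  by_cases htop : ∫⁻ s in Ioo z y, ‖deriv F s‖ₑ = ⊤
  · exact htop ▸ le_top
  have hint : IntegrableOn (deriv F) (Ioo z y) :=
    ⟨(measurable_deriv F).aestronglyMeasurable, lt_top_iff_ne_top.2 htop⟩
  have hFTC := intervalIntegral.integral_eq_sub_of_hasDerivAt_of_le hzy hF
    (fun s hs ↦ ((hF' s hs).differentiableAt (Ioo_mem_nhds hs.1 hs.2)).hasDerivAt)
    ((intervalIntegrable_iff_integrableOn_Ioo_of_le hzy).2 hint)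
  rw [← hFTC, intervalIntegral.integral_of_le hzy, integral_Ioc_eq_integral_Ioo]
  exact enorm_integral_le_lintegral_enorm _

theorem ofReal_sq_sub_le_abs_mul_lintegral_deriv_sq {F : ℝ → ℝ} {z y : ℝ}
    (hF : ContinuousOn F (uIcc z y)) (hF' : DifferentiableOn ℝ F (uIoo z y)) :
    ENNReal.ofReal ((F y - F z) ^ 2) ≤
      ENNReal.ofReal |y - z| * ∫⁻ s in uIoo z y, ‖deriv F s‖ₑ ^ 2 := by
  wlog hzy : z ≤ y generalizing z y
  · have := this (uIcc_comm z y ▸ hF) (uIoo_comm z y ▸ hF') (le_of_not_ge hzy)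
    rwa [uIoo_comm, abs_sub_comm, ← neg_sub, neg_sq]
  rw [uIcc_of_le hzy] at hF
  rw [uIoo_of_le hzy] at hF' ⊢
  calc ENNReal.ofReal ((F y - F z) ^ 2) = ‖F y - F z‖ₑ ^ 2 := by
        rw [Real.enorm_eq_ofReal_abs, ← ENNReal.ofReal_pow (abs_nonneg _), sq_abs]
    _ ≤ (∫⁻ s in Ioo z y, ‖deriv F s‖ₑ) ^ 2 := by
        gcongr; exact enorm_sub_le_lintegral_enorm_deriv hzy hF hF'
    _ ≤ ENNReal.ofReal |y - z| * ∫⁻ s in Ioo z y, ‖deriv F s‖ₑ ^ 2 := by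
        simpa [abs_of_nonneg (sub_nonneg.2 hzy)] using lintegral_sq_le_measure_univ_mul
          (volume.restrict (Ioo z y)) (measurable_deriv F).enorm.aemeasurable

theorem exists_eq_zero_forall_uIoo_ne_zero {d : ℝ → ℝ} {x y : ℝ}
    (hd : ContinuousOn d (uIcc x y)) (hx : d x = 0) :
    ∃ z ∈ uIcc x y, d z = 0 ∧ ∀ s ∈ uIoo z y, d s ≠ 0 := by
  have hclosed : IsClosed (uIcc x y ∩ d ⁻¹' {0}) :=
    hd.preimage_isClosed_of_isClosed isClosed_Icc isClosed_singleton
  obtain ⟨z, ⟨hz, hdz⟩, hmin⟩ := (isCompact_uIcc.of_isClosed_subset hclosed inter_subset_left)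
    |>.exists_isMinOn ⟨x, left_mem_uIcc, hx⟩ (continuous_const.sub continuous_id).abs.continuousOn
  refine ⟨z, hz, hdz, fun s hs hds ↦ ?_⟩
  have hle : |y - z| ≤ |y - s| :=
    hmin ⟨uIcc_subset_uIcc hz right_mem_uIcc (uIoo_subset_uIcc_self hs), hds⟩
  rcases le_total z y with h | h
  · rw [uIoo_of_le h] at hs
    rw [abs_of_nonneg (by linarith), abs_of_nonneg (by linarith [hs.2])] at hle
    linarith [hs.1]
  · rw [uIoo_of_ge h] at hs
    rw [abs_of_nonpos (by linarith), abs_of_nonpos (by linarith [hs.1])] at hle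
    linarith [hs.2]

theorem ofReal_four_mul_le_abs_sub_mul_lintegral_of_eq_zero {d : ℝ → ℝ} {x₀ y : ℝ}
    (hd : ContinuousOn d (uIcc x₀ y)) (hd_nonneg : ∀ s ∈ uIcc x₀ y, 0 ≤ d s)
    (hd_diff : ∀ s ∈ uIoo x₀ y, 0 < d s → DifferentiableAt ℝ d s) (h0 : d x₀ = 0) :
    ENNReal.ofReal (4 * d y) ≤
      ENNReal.ofReal |y - x₀| * ∫⁻ s in uIoo x₀ y, ENNReal.ofReal (deriv d s ^ 2 / d s) := by
  obtain ⟨z, hz, hdz, hne⟩ := exists_eq_zero_forall_uIoo_ne_zero hd h0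
  have hIcc : uIcc z y ⊆ uIcc x₀ y := uIcc_subset_uIcc hz right_mem_uIcc
  have hIoo : uIoo z y ⊆ uIoo x₀ y := uIoo_subset_Ioo hz right_mem_uIcc
  have hpos : ∀ s ∈ uIoo z y, 0 < d s := fun s hs ↦
    (hd_nonneg s (hIcc (uIoo_subset_uIcc_self hs))).lt_of_ne' (hne s hs)
  have hderiv : ∀ s ∈ uIoo z y,
      HasDerivAt (fun u ↦ 2 * √(d u)) (2 * (deriv d s / (2 * √(d s)))) s := fun s hs ↦
    ((hd_diff s (hIoo hs) (hpos s hs)).hasDerivAt.sqrt (hpos s hs).ne').const_mul 2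
  calc ENNReal.ofReal (4 * d y) = ENNReal.ofReal ((2 * √(d y) - 2 * √(d z)) ^ 2) := by
        rw [hdz, Real.sqrt_zero, mul_zero, sub_zero, mul_pow,
          Real.sq_sqrt (hd_nonneg y right_mem_uIcc)]
        norm_num
    _ ≤ ENNReal.ofReal |y - z| * ∫⁻ s in uIoo z y, ‖deriv (fun u ↦ 2 * √(d u)) s‖ₑ ^ 2 :=
        ofReal_sq_sub_le_abs_mul_lintegral_deriv_sq
          (continuousOn_const.mul (Real.continuous_sqrt.comp_continuousOn (hd.mono hIcc)))
          fun s hs ↦ (hderiv s hs).differentiableAt.differentiableWithinAt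
    _ = ENNReal.ofReal |y - z| * ∫⁻ s in uIoo z y, ENNReal.ofReal (deriv d s ^ 2 / d s) := by
        congr 1
        refine setLIntegral_congr_fun measurableSet_Ioo fun s hs ↦ ?_
        rw [(hderiv s hs).deriv, Real.enorm_eq_ofReal_abs, ← ENNReal.ofReal_pow (abs_nonneg _),
          sq_abs, ← mul_div_assoc, mul_div_mul_left _ _ two_ne_zero, div_pow,
          Real.sq_sqrt (hpos s hs).le]
    _ ≤ ENNReal.ofReal |y - x₀| * ∫⁻ s in uIoo x₀ y, ENNReal.ofReal (deriv d s ^ 2 / d s) := by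
        gcongr ?_ * ?_
        · exact ENNReal.ofReal_le_ofReal (abs_sub_right_of_mem_uIcc hz)
        · exact lintegral_mono_set hIoo

theorem lintegral_inv_ofReal_eq_top_of_le_mul_abs_sub {d : ℝ → ℝ} {p q x₀ : ℝ} {C : ℝ≥0∞}
    (hpq : p < q) (hx₀ : x₀ ∈ Icc p q) (hC : C ≠ ⊤)
    (hd : ∀ y ∈ Ioo p q, ENNReal.ofReal (d y) ≤ ENNReal.ofReal |y - x₀| * C) :
    ∫⁻ y in Ioo p q, (ENNReal.ofReal (d y))⁻¹ = ⊤ := by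
  by_contra hfin
  wlog hC₀ : C ≠ 0 generalizing C
  · exact this ENNReal.one_ne_top (fun y hy ↦ (hd y hy).trans (by simp [not_not.1 hC₀]))
      one_ne_zero
  have hpt : ∀ y ∈ Ioo p q, ‖(y - x₀)⁻¹‖ₑ ≤ C * (ENNReal.ofReal (d y))⁻¹ := by
    intro y hy
    calc ‖(y - x₀)⁻¹‖ₑ ≤ (ENNReal.ofReal |y - x₀|)⁻¹ := by
          rw [← Real.enorm_eq_ofReal_abs]
          rcases eq_or_ne (y - x₀) 0 with h | h
          · simp [h]
          · rw [enorm_inv h]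
      _ = C * (ENNReal.ofReal |y - x₀| * C)⁻¹ := by
          rw [ENNReal.mul_inv (Or.inr hC) (Or.inl ENNReal.ofReal_ne_top), mul_left_comm,
            ENNReal.mul_inv_cancel hC₀ hC, mul_one]
      _ ≤ C * (ENNReal.ofReal (d y))⁻¹ := by gcongr; exact hd y hy
  have hint : IntegrableOn (fun y ↦ (y - x₀)⁻¹) (Ioo p q) := by
    refine ⟨(measurable_id.sub_const x₀).inv.aestronglyMeasurable, ?_⟩
    calc ∫⁻ y in Ioo p q, ‖(y - x₀)⁻¹‖ₑ ≤ ∫⁻ y in Ioo p q, C * (ENNReal.ofReal (d y))⁻¹ :=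
          setLIntegral_mono' measurableSet_Ioo hpt
      _ < ⊤ := by
          rw [lintegral_const_mul' _ _ hC]
          exact ENNReal.mul_lt_top hC.lt_top (lt_top_iff_ne_top.2 hfin)
  rcases intervalIntegrable_sub_inv_iff.1
    ((intervalIntegrable_iff_integrableOn_Ioo_of_le hpq.le).2 hint) with h | h
  · exact hpq.ne h
  · exact h (by rwa [uIcc_of_le hpq.le])

theorem ContinuousOn.exists_Icc_subset_forall_lt {f : ℝ → ℝ} {a b x₀ c : ℝ} (hab : a < b)
    (hf : ContinuousOn f (Icc a b)) (hx₀ : x₀ ∈ Icc a b) (hc : c < f x₀) :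
    ∃ p q, p < q ∧ x₀ ∈ Icc p q ∧ Icc p q ⊆ Icc a b ∧ ∀ y ∈ Icc p q, c < f y := by
  obtain ⟨δ, hδ, hball⟩ := Metric.mem_nhdsWithin_iff.1 ((hf x₀ hx₀).eventually (lt_mem_nhds hc))
  refine ⟨max a (x₀ - δ / 2), min b (x₀ + δ / 2), ?_, ?_, ?_, fun y hy ↦ hball ⟨?_, ?_⟩⟩
  · exact max_lt (lt_min hab (by linarith [hx₀.1])) (lt_min (by linarith [hx₀.2]) (by linarith))
  · exact ⟨max_le hx₀.1 (by linarith), le_min hx₀.2 (by linarith)⟩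
  · exact Icc_subset_Icc (le_max_left _ _) (min_le_left _ _)
  · rw [Metric.mem_ball, Real.dist_eq, abs_sub_lt_iff]
    constructor <;> linarith [hy.1, hy.2, le_max_right a (x₀ - δ / 2), min_le_right b (x₀ + δ / 2)]
  · exact ⟨(le_max_left _ _).trans hy.1, hy.2.trans (min_le_left _ _)⟩

theorem differentiableAt_of_contDiffOn_pos_s5 {d : ℝ → ℝ} {a b s : ℝ}
    (hd : ContinuousOn d (Icc a b)) (hd_C1 : ContDiffOn ℝ 1 d {x ∈ Icc a b | 0 < d x})
    (hs : s ∈ Ioo a b) (hds : 0 < d s) : DifferentiableAt ℝ d s :=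
  have hIcc : Icc a b ∈ 𝓝 s := Icc_mem_nhds hs.1 hs.2
  (hd_C1.differentiableOn one_ne_zero).differentiableAt <|
    Filter.inter_mem hIcc ((hd.continuousAt hIcc).eventually (lt_mem_nhds hds))

/-- Lemma `lem411`: if `w₀ ∈ C⁰(Ω̄)` is nonnegative and `∫_Ω (d_x²/d) w₀ < ∞`,
then `w₀` vanishes at every zero of `d`. -/
theorem stmt_5
    (a b : ℝ) (hab : a < b)
    (d : ℝ → ℝ)
    (hd_cont : ContinuousOn d (Set.Icc a b))
    (hd_nonneg : ∀ x ∈ Set.Icc a b, 0 ≤ d x)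
    (hd_C1 : ContDiffOn ℝ 1 d {x ∈ Set.Icc a b | 0 < d x})
    (hd_int : (∫⁻ x in Set.Ioo a b, (ENNReal.ofReal (d x))⁻¹) < ⊤)
    (w₀ : ℝ → ℝ)
    (hw₀_cont : ContinuousOn w₀ (Set.Icc a b))
    (hw₀_nonneg : ∀ x ∈ Set.Icc a b, 0 ≤ w₀ x)
    (hw₀d : (∫⁻ x in Set.Ioo a b, ENNReal.ofReal ((deriv d x) ^ 2 / d x * w₀ x)) < ⊤) :
    ∀ x ∈ Set.Icc a b, d x = 0 → w₀ x = 0 := by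
  intro x₀ hx₀ hdx₀
  by_contra hw
  have hε : 0 < w₀ x₀ := (hw₀_nonneg x₀ hx₀).lt_of_ne' hw
  obtain ⟨p, q, hpq, hx₀pq, hIcc, hw_gt⟩ :=
    hw₀_cont.exists_Icc_subset_forall_lt hab hx₀ (half_lt_self hε)
  have hIoo : Ioo p q ⊆ Ioo a b :=
    Ioo_subset_Ioo (hIcc ⟨le_rfl, hpq.le⟩).1 (hIcc ⟨hpq.le, le_rfl⟩).2
  set M := ∫⁻ s in Ioo p q, ENNReal.ofReal (deriv d s ^ 2 / d s)
  have hM : M < ⊤ := calc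
    M ≤ ENNReal.ofReal (w₀ x₀ / 2)⁻¹ *
        ∫⁻ s in Ioo p q, ENNReal.ofReal (deriv d s ^ 2 / d s * w₀ s) :=
      setLIntegral_ofReal_le_inv_mul_setLIntegral_mul measurableSet_Ioo (half_pos hε)
        (fun s hs ↦ div_nonneg (sq_nonneg _) (hd_nonneg s (hIcc (Ioo_subset_Icc_self hs))))
        (fun s hs ↦ (hw_gt s (Ioo_subset_Icc_self hs)).le)
    _ ≤ ENNReal.ofReal (w₀ x₀ / 2)⁻¹ *
        ∫⁻ s in Ioo a b, ENNReal.ofReal (deriv d s ^ 2 / d s * w₀ s) := by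
      gcongr
    _ < ⊤ := ENNReal.mul_lt_top ENNReal.ofReal_lt_top hw₀d
  have hgrowth : ∀ y ∈ Ioo p q, ENNReal.ofReal (d y) ≤ ENNReal.ofReal |y - x₀| * M := by
    intro y hy
    have hsub : uIcc x₀ y ⊆ Icc p q := uIcc_subset_Icc hx₀pq (Ioo_subset_Icc_self hy)
    have hsub' : uIoo x₀ y ⊆ Ioo p q := uIoo_subset_Ioo hx₀pq (Ioo_subset_Icc_self hy)
    calc ENNReal.ofReal (d y) ≤ ENNReal.ofReal (4 * d y) :=
          ENNReal.ofReal_le_ofReal (by linarith [hd_nonneg y (hIcc (Ioo_subset_Icc_self hy))])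
      _ ≤ ENNReal.ofReal |y - x₀| * ∫⁻ s in uIoo x₀ y, ENNReal.ofReal (deriv d s ^ 2 / d s) :=
          ofReal_four_mul_le_abs_sub_mul_lintegral_of_eq_zero (hd_cont.mono (hsub.trans hIcc))
            (fun s hs ↦ hd_nonneg s (hIcc (hsub hs)))
            (fun s hs ↦ differentiableAt_of_contDiffOn_pos_s5 hd_cont hd_C1 (hIoo (hsub' hs)))
            hdx₀
      _ ≤ ENNReal.ofReal |y - x₀| * M := by gcongr; exact lintegral_mono_set hsub'
  have htop := lintegral_inv_ofReal_eq_top_of_le_mul_abs_sub hpq hx₀pq hM.ne hgrowth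
  exact (htop ▸ lintegral_mono_set hIoo).not_gt hd_int
end

section
/- Let (d_ε)_{ε∈(0,1)} ⊂ C^∞(Ω̄) be a family with d ≤ d_ε in Ω, d_ε → d in L^∞(Ω) as ε ↘ 0, d_{εx} → d_x in L²_loc({d>0}) as ε ↘ 0, and √ε ∫_Ω d_{εx}⁴/d_ε² ≤ 1 for all ε ∈ (0,1); and let (w_{0j})_{j∈ℕ} ⊂ L^∞(Ω) be a sequence with w_{0j} ≥ 0, √w_{0j} ∈ W^{1,2}(Ω), supp w_{0j} ⊂ {d>0}, w_{0j} ↗ w₀ pointwise in Ω, and sup_j ∫_Ω d (w_{0jx})²/w_{0j} < ∞. Then there exist a sequence (ε_j)_{j∈ℕ} ⊂ (0,1) with ε_j ↘ 0 as j → ∞ and a constant C > 0 such that, defining w_{0ε_j}(x) := w_{0j}(x) + ε_j^{1/4} for x ∈ Ω̄, one has ∫_Ω d_{ε_j} (w_{0ε_j x})²/w_{0ε_j} ≤ C and ∫_Ω (d_{ε_j x}²/d_{ε_j}) w_{0ε_j} ≤ C for all j ∈ ℕ. -/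
open MeasureTheory Set Filter

/-- `f'` is the weak derivative of `f` on the interval `(a,b)`. -/
def IsWeakDerivOn (a b : ℝ) (f f' : ℝ → ℝ) : Prop :=
  ∀ φ : ℝ → ℝ, ContDiff ℝ (⊤ : ℕ∞) φ → tsupport φ ⊆ Set.Ioo a b →
    (∫ x in Set.Ioo a b, f x * deriv φ x) = - ∫ x in Set.Ioo a b, f' x * φ x

private lemma not_integrableOn_inv_abs_base {t : ℝ} (ht : 0 < t) :
    ¬ IntegrableOn (fun y : ℝ => |y|⁻¹) (Ioo 0 t) := by
  intro H
  have H' : IntegrableOn (fun x : ℝ => x ^ (-1 : ℝ)) (Ioo (0:ℝ) t) := by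
    apply H.congr_fun ?_ measurableSet_Ioo
    intro x hx
    show |x|⁻¹ = x ^ (-1 : ℝ)
    rw [abs_of_pos hx.1, Real.rpow_neg_one]
  have := (intervalIntegral.integrableOn_Ioo_rpow_iff ht).1 H'
  linarith

private lemma not_integrableOn_inv_abs_right {x0 t : ℝ} (h : x0 < t) :
    ¬ IntegrableOn (fun y : ℝ => |y - x0|⁻¹) (Ioo x0 t) := by
  intro H
  have H1 : IntervalIntegrable (fun y : ℝ => |y - x0|⁻¹) volume x0 t := by
    rwa [intervalIntegrable_iff_integrableOn_Ioo_of_le h.le]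
  have H2 := H1.comp_add_right x0
  have H3 : IntervalIntegrable (fun y : ℝ => |y|⁻¹) volume 0 (t - x0) := by
    simpa using H2
  rw [intervalIntegrable_iff_integrableOn_Ioo_of_le (by linarith)] at H3
  exact not_integrableOn_inv_abs_base (by linarith) H3

private lemma not_integrableOn_inv_abs_left {x0 t : ℝ} (h : t < x0) :
    ¬ IntegrableOn (fun y : ℝ => |y - x0|⁻¹) (Ioo t x0) := by
  intro H
  have H1 : IntervalIntegrable (fun y : ℝ => |y - x0|⁻¹) volume t x0 := by
    rwa [intervalIntegrable_iff_integrableOn_Ioo_of_le h.le]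
  have H2 := H1.comp_sub_left x0
  have H3 : IntervalIntegrable (fun y : ℝ => |y|⁻¹) volume 0 (x0 - t) := by
    have : (fun y : ℝ => |x0 - y - x0|⁻¹) = fun y : ℝ => |y|⁻¹ := by
      funext y; rw [show x0 - y - x0 = -y by ring, abs_neg]
    simpa [this] using H2.symm
  rw [intervalIntegrable_iff_integrableOn_Ioo_of_le (by linarith)] at H3
  exact not_integrableOn_inv_abs_base (by linarith) H3


private lemma dd_pos_aux
    (a b : ℝ) (hab : a < b) (d g : ℝ → ℝ)
    (hd_nonneg : ∀ x ∈ Set.Icc a b, 0 ≤ d x)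
    (hd_int : (∫⁻ x in Set.Ioo a b, (ENNReal.ofReal (d x))⁻¹) < ⊤)
    (hsm : ContDiffOn ℝ (⊤ : ℕ∞) g (Set.Icc a b))
    (hge : ∀ x ∈ Set.Ioo a b, d x ≤ g x) :
    ∀ x ∈ Set.Icc a b, 0 < g x := by
  have hcont : ContinuousOn g (Set.Icc a b) := hsm.continuousOn
  -- nonnegativity of g on Icc
  have hg0 : ∀ x ∈ Set.Icc a b, 0 ≤ g x := by
    intro x hx
    have hxcl : x ∈ closure (Set.Ioo a b) := by
      rw [closure_Ioo hab.ne]; exact hx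
    have hne : (nhdsWithin x (Set.Ioo a b)).NeBot :=
      mem_closure_iff_nhdsWithin_neBot.1 hxcl
    have htd : Tendsto g (nhdsWithin x (Set.Ioo a b)) (nhds (g x)) :=
      ((hcont x hx).mono Set.Ioo_subset_Icc_self).tendsto
    refine ge_of_tendsto htd ?_
    filter_upwards [eventually_mem_nhdsWithin] with y hy
    exact le_trans (hd_nonneg y (Set.Ioo_subset_Icc_self hy)) (hge y hy)
  intro x hx
  by_contra hc
  push_neg at hc
  have hx0 : g x = 0 := le_antisymm hc (hg0 x hx)
  -- g is differentiable within Icc at x, so g y ≤ C |y - x| near x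
  have hdw : HasDerivWithinAt g (derivWithin g (Set.Icc a b) x) (Set.Icc a b) x :=
    ((hsm.differentiableOn (by simp)) x hx).hasDerivWithinAt
  have hO := HasFDerivWithinAt.isBigO_sub hdw
  rw [Asymptotics.isBigO_iff] at hO
  obtain ⟨c, hc'⟩ := hO
  rw [eventually_nhdsWithin_iff, Metric.eventually_nhds_iff] at hc'
  obtain ⟨r, hr, hball⟩ := hc'
  set C : ℝ := max c 1 with hC
  have hCpos : 0 < C := lt_of_lt_of_le one_pos (le_max_right _ _)
  have key : ∀ y ∈ Set.Ioo a b, dist y x < r → d y ≤ C * |y - x| := by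
    intro y hy hyr
    have h1 := hball hyr (Set.Ioo_subset_Icc_self hy)
    simp only [hx0, sub_zero, Real.norm_eq_abs] at h1
    have h2 : g y ≤ c * |y - x| := le_trans (le_abs_self _) h1
    have h3 : c * |y - x| ≤ C * |y - x| :=
      mul_le_mul_of_nonneg_right (le_max_left _ _) (abs_nonneg _)
    exact le_trans (hge y hy) (le_trans h2 h3)
  -- choose an interval J adjacent to x inside Ioo a b ∩ ball
  obtain ⟨u, v, huv, hJsub, hside⟩ :
      ∃ u v : ℝ, u < v ∧ Set.Ioo u v ⊆ Set.Ioo a b ∧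
        ((x = u ∧ ∀ y ∈ Set.Ioo u v, dist y x < r) ∨
         (x = v ∧ ∀ y ∈ Set.Ioo u v, dist y x < r)) := by
    rcases lt_or_eq_of_le hx.2 with hxb | hxb
    · refine ⟨x, min b (x + r), lt_min hxb (by linarith), ?_, Or.inl ⟨rfl, ?_⟩⟩
      · intro y hy
        exact ⟨lt_of_le_of_lt hx.1 hy.1, lt_of_lt_of_le hy.2 (min_le_left _ _)⟩
      · intro y hy
        rw [Real.dist_eq, abs_of_pos (by linarith [hy.1])]
        have := lt_of_lt_of_le hy.2 (min_le_right _ _); linarith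
    · refine ⟨max a (x - r), x, max_lt (hxb ▸ hab) (by linarith), ?_, Or.inr ⟨rfl, ?_⟩⟩
      · intro y hy
        exact ⟨lt_of_le_of_lt (le_max_left _ _) hy.1, by rw [← hxb]; exact hy.2⟩
      · intro y hy
        rw [Real.dist_eq, abs_of_neg (by linarith [hy.2])]
        have := lt_of_le_of_lt (le_max_right _ _) hy.1; linarith
  -- the function (C * |y - x|)⁻¹ is integrable on J by comparison with 1/d
  have hmeas : Measurable fun y : ℝ => (C * |y - x|)⁻¹ :=
    (((measurable_id.sub_const x).abs).const_mul C).inv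
  have hInt : IntegrableOn (fun y : ℝ => (C * |y - x|)⁻¹) (Set.Ioo u v) := by
    constructor
    · exact hmeas.aestronglyMeasurable
    · rw [hasFiniteIntegral_iff_ofReal]
      · calc (∫⁻ y in Set.Ioo u v, ENNReal.ofReal ((C * |y - x|)⁻¹))
            ≤ ∫⁻ y in Set.Ioo u v, (ENNReal.ofReal (d y))⁻¹ := by
              refine lintegral_mono_ae ((ae_restrict_iff' measurableSet_Ioo).2
                (Filter.Eventually.of_forall ?_))
              intro y hy
              have hyx : y ≠ x := by
                rcases hside with ⟨hxu, _⟩ | ⟨hxv, _⟩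
                · exact fun h => absurd hy.1 (by rw [h, hxu]; exact lt_irrefl _)
                · exact fun h => absurd hy.2 (by rw [h, hxv]; exact lt_irrefl _)
              have habs : 0 < |y - x| := abs_pos.2 (sub_ne_zero.2 hyx)
              have hCx : 0 < C * |y - x| := mul_pos hCpos habs
              rw [ENNReal.ofReal_inv_of_pos hCx]
              refine ENNReal.inv_le_inv.2 (ENNReal.ofReal_le_ofReal ?_)
              rcases hside with ⟨_, hd'⟩ | ⟨_, hd'⟩
              · exact key y (hJsub hy) (hd' y hy)
              · exact key y (hJsub hy) (hd' y hy)
          _ ≤ ∫⁻ y in Set.Ioo a b, (ENNReal.ofReal (d y))⁻¹ :=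
              lintegral_mono' (Measure.restrict_mono hJsub le_rfl) le_rfl
          _ < ⊤ := hd_int
      · exact Filter.Eventually.of_forall fun y => inv_nonneg.2 (by positivity)
  -- but it is not integrable
  have hInt' : IntegrableOn (fun y : ℝ => |y - x|⁻¹) (Set.Ioo u v) := by
    have h2 : IntegrableOn (fun y : ℝ => C * (C * |y - x|)⁻¹) (Set.Ioo u v) :=
      hInt.const_mul C
    refine IntegrableOn.congr_fun h2 (fun y _ => ?_) measurableSet_Ioo
    rw [mul_inv, ← mul_assoc, mul_inv_cancel₀ hCpos.ne', one_mul]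
  rcases hside with ⟨hxu, _⟩ | ⟨hxv, _⟩
  · exact not_integrableOn_inv_abs_right (hxu ▸ huv) (hxu ▸ hInt')
  · exact not_integrableOn_inv_abs_left (hxv ▸ huv) (hxv ▸ hInt')

private lemma deriv_bound_of_contDiffOn_Icc {a b : ℝ} (hab : a < b) {g : ℝ → ℝ}
    (hsm : ContDiffOn ℝ (⊤ : ℕ∞) g (Set.Icc a b)) :
    ∃ M : ℝ, 0 ≤ M ∧ ∀ x ∈ Set.Ioo a b, |deriv g x| ≤ M := by
  have hcd : ContinuousOn (derivWithin g (Set.Icc a b)) (Set.Icc a b) :=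
    hsm.continuousOn_derivWithin (uniqueDiffOn_Icc hab) (by simp)
  obtain ⟨M, hM⟩ := IsCompact.exists_bound_of_continuousOn isCompact_Icc hcd
  refine ⟨max M 0, le_max_right _ _, fun x hx => ?_⟩
  rw [← derivWithin_of_mem_nhds (Icc_mem_nhds hx.1 hx.2)]
  exact le_trans (hM x (Set.Ioo_subset_Icc_self hx)) (le_max_left _ _)

private lemma deriv_d_bound_on_compact {a b : ℝ} (hab : a < b) {d : ℝ → ℝ}
    (hd_cont : ContinuousOn d (Set.Icc a b))
    (hd_C1 : ContDiffOn ℝ 1 d {x ∈ Set.Icc a b | 0 < d x})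
    {K : Set ℝ} (hK : IsCompact K) (hKS : K ⊆ {x ∈ Set.Icc a b | 0 < d x}) :
    ∃ M : ℝ, 0 ≤ M ∧ ∀ x ∈ K, x ∈ Set.Ioo a b → |deriv d x| ≤ M := by
  set S := {x ∈ Set.Icc a b | 0 < d x} with hS
  obtain ⟨u, hu, huS⟩ := (continuousOn_iff'.1 hd_cont) (Set.Ioi 0) isOpen_Ioi
  have hSeq : S = Set.Icc a b ∩ u := by
    have : {x | x ∈ Set.Icc a b ∧ 0 < d x} = d ⁻¹' Set.Ioi 0 ∩ Set.Icc a b := by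
      ext x; simp [Set.mem_Ioi, and_comm]
    rw [hS, this, huS, Set.inter_comm]
  have hSud : UniqueDiffOn ℝ S := by
    rw [hSeq]; exact (uniqueDiffOn_Icc hab).inter hu
  have hcd : ContinuousOn (derivWithin d S) S :=
    hd_C1.continuousOn_derivWithin hSud le_rfl
  obtain ⟨M, hM⟩ := IsCompact.exists_bound_of_continuousOn hK (hcd.mono hKS)
  refine ⟨max M 0, le_max_right _ _, fun x hxK hxI => ?_⟩
  have hxu : x ∈ u := by
    have := hKS hxK; rw [hSeq] at this; exact this.2
  have hSmem : S ∈ nhds x := by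
    refine Filter.mem_of_superset ((isOpen_Ioo.inter hu).mem_nhds ⟨hxI, hxu⟩) ?_
    rw [hSeq]; exact Set.inter_subset_inter_left u Set.Ioo_subset_Icc_self
  rw [← derivWithin_of_mem_nhds hSmem]
  exact le_trans (hM x hxK) (le_max_left _ _)

set_option maxHeartbeats 1000000 in
private lemma int1_bound
    (a b : ℝ) (hab : a < b) (d W σ DD : ℝ → ℝ) (ε η1 Md Cen : ℝ)
    (hd_nonneg : ∀ x ∈ Set.Icc a b, 0 ≤ d x)
    (hd_cont : ContinuousOn d (Set.Icc a b))
    (hMd : ∀ x ∈ Set.Icc a b, d x ≤ Md)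
    (hW_nonneg : ∀ x ∈ Set.Ioo a b, 0 ≤ W x)
    (hsqW : MemLp (fun x => Real.sqrt (W x)) 2 (volume.restrict (Set.Ioo a b)))
    (hσ : MemLp σ 2 (volume.restrict (Set.Ioo a b)))
    (hen : (∫ x in Set.Ioo a b, d x * (2 * Real.sqrt (W x) * σ x) ^ 2 / W x) ≤ Cen)
    (hε : 0 < ε)
    (hDDge : ∀ x ∈ Set.Ioo a b, d x ≤ DD x)
    (hconv : ∀ x ∈ Set.Icc a b, |DD x - d x| ≤ η1)
    (hη1 : 0 ≤ η1)
    (hη1I : 4 * η1 * (∫ x in Set.Ioo a b, σ x ^ 2) ≤ 1) :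
    (∫ x in Set.Ioo a b,
        DD x * (2 * Real.sqrt (W x) * σ x) ^ 2 / (W x + ε ^ ((1:ℝ)/4))) ≤ Cen + 1 := by
  set δ : ℝ := ε ^ ((1:ℝ)/4) with hδdef
  have hδ : 0 < δ := Real.rpow_pos_of_pos hε _
  have hMd0 : 0 ≤ Md :=
    le_trans (hd_nonneg a ⟨le_rfl, hab.le⟩) (hMd a ⟨le_rfl, hab.le⟩)
  -- measurability
  have hdm : AEStronglyMeasurable d (volume.restrict (Set.Ioo a b)) :=
    (hd_cont.mono Set.Ioo_subset_Icc_self).aestronglyMeasurable measurableSet_Ioo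
  have hsqm := hsqW.aestronglyMeasurable
  have hσm := hσ.aestronglyMeasurable
  have hWm : AEStronglyMeasurable W (volume.restrict (Set.Ioo a b)) := by
    refine AEStronglyMeasurable.congr (hsqm.mul hsqm) ?_
    filter_upwards [ae_restrict_mem measurableSet_Ioo] with x hx
    simp only [Pi.mul_apply]
    exact Real.mul_self_sqrt (hW_nonneg x hx)
  have hσ2 : Integrable (fun x => σ x ^ 2) (volume.restrict (Set.Ioo a b)) :=
    hσ.integrable_sq
  -- the comparison function g1
  have hnum_m : AEMeasurable (fun x => (2 * Real.sqrt (W x) * σ x) ^ 2)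
      (volume.restrict (Set.Ioo a b)) :=
    ((aemeasurable_const.mul hsqm.aemeasurable).mul hσm.aemeasurable).pow aemeasurable_const
  have hg1m : AEStronglyMeasurable
      (fun x => d x * (2 * Real.sqrt (W x) * σ x) ^ 2 / W x)
      (volume.restrict (Set.Ioo a b)) :=
    ((hdm.aemeasurable.mul hnum_m).div hWm.aemeasurable).aestronglyMeasurable
  have hval : ∀ x ∈ Set.Ioo a b, 0 < W x →
      d x * (2 * Real.sqrt (W x) * σ x) ^ 2 / W x = 4 * d x * σ x ^ 2 := by
    intro x hx hWpos
    have hsq : Real.sqrt (W x) ^ 2 = W x := Real.sq_sqrt (le_of_lt hWpos)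
    field_simp
    linear_combination (4 * d x * σ x ^ 2) * hsq
  have hval0 : ∀ x : ℝ, W x = 0 →
      d x * (2 * Real.sqrt (W x) * σ x) ^ 2 / W x = 0 := by
    intro x h0
    rw [h0]
    simp
  have hg1_nonneg : ∀ x ∈ Set.Ioo a b,
      0 ≤ d x * (2 * Real.sqrt (W x) * σ x) ^ 2 / W x := fun x hx =>
    div_nonneg (mul_nonneg (hd_nonneg x (Set.Ioo_subset_Icc_self hx)) (sq_nonneg _))
      (hW_nonneg x hx)
  have hg1_le : ∀ x ∈ Set.Ioo a b,
      d x * (2 * Real.sqrt (W x) * σ x) ^ 2 / W x ≤ 4 * Md * σ x ^ 2 := by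
    intro x hx
    rcases eq_or_lt_of_le (hW_nonneg x hx) with hW0 | hWpos
    · rw [hval0 x hW0.symm]
      positivity
    · rw [hval x hx hWpos]
      have := hMd x (Set.Ioo_subset_Icc_self hx)
      nlinarith [sq_nonneg (σ x)]
  have hg1_int : Integrable (fun x => d x * (2 * Real.sqrt (W x) * σ x) ^ 2 / W x)
      (volume.restrict (Set.Ioo a b)) := by
    refine Integrable.mono' (hσ2.const_mul (4 * Md)) hg1m ?_
    filter_upwards [ae_restrict_mem measurableSet_Ioo] with x hx
    rw [Real.norm_eq_abs, abs_of_nonneg (hg1_nonneg x hx)]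
    exact hg1_le x hx
  have hg_int : Integrable
      (fun x => d x * (2 * Real.sqrt (W x) * σ x) ^ 2 / W x + 4 * η1 * σ x ^ 2)
      (volume.restrict (Set.Ioo a b)) :=
    hg1_int.add (hσ2.const_mul (4 * η1))
  have hmain : (∫ x in Set.Ioo a b,
      DD x * (2 * Real.sqrt (W x) * σ x) ^ 2 / (W x + δ)) ≤
      ∫ x in Set.Ioo a b,
        (d x * (2 * Real.sqrt (W x) * σ x) ^ 2 / W x + 4 * η1 * σ x ^ 2) := by
    refine integral_mono_of_nonneg ?_ hg_int ?_
    · filter_upwards [ae_restrict_mem measurableSet_Ioo] with x hx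
      have h1 : 0 ≤ DD x := le_trans (hd_nonneg x (Set.Ioo_subset_Icc_self hx)) (hDDge x hx)
      have h2 : 0 < W x + δ := add_pos_of_nonneg_of_pos (hW_nonneg x hx) hδ
      positivity
    · filter_upwards [ae_restrict_mem measurableSet_Ioo] with x hx
      have hWx : 0 ≤ W x := hW_nonneg x hx
      have hdx : 0 ≤ d x := hd_nonneg x (Set.Ioo_subset_Icc_self hx)
      have hDd : d x ≤ DD x := hDDge x hx
      have habs : DD x - d x ≤ η1 :=
        le_trans (le_abs_self _) (hconv x (Set.Ioo_subset_Icc_self hx))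
      have hsq : Real.sqrt (W x) ^ 2 = W x := Real.sq_sqrt hWx
      have hNum : (2 * Real.sqrt (W x) * σ x) ^ 2 = 4 * W x * σ x ^ 2 := by
        rw [mul_pow, mul_pow, hsq]; ring
      show DD x * (2 * Real.sqrt (W x) * σ x) ^ 2 / (W x + δ) ≤
        d x * (2 * Real.sqrt (W x) * σ x) ^ 2 / W x + 4 * η1 * σ x ^ 2
      rcases eq_or_lt_of_le hWx with hW0 | hWpos
      · have hz : DD x * (2 * Real.sqrt (W x) * σ x) ^ 2 / (W x + δ) = 0 := by
          rw [hNum, ← hW0]; ring_nf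
        rw [hz, hval0 x hW0.symm]
        positivity
      · have hP : 0 < W x + δ := by linarith
        rw [hval x hx hWpos, hNum, div_le_iff₀ hP]
        nlinarith [sq_nonneg (σ x), mul_nonneg (mul_nonneg hdx hWx) (sq_nonneg (σ x)),
          mul_nonneg hη1 (sq_nonneg (σ x)), mul_pos hWpos hδ,
          mul_nonneg (mul_nonneg hdx hδ.le) (sq_nonneg (σ x)),
          mul_nonneg (mul_nonneg hη1 hδ.le) (sq_nonneg (σ x)),
          mul_nonneg (mul_nonneg hη1 hWpos.le) (sq_nonneg (σ x))]
  calc (∫ x in Set.Ioo a b, DD x * (2 * Real.sqrt (W x) * σ x) ^ 2 / (W x + δ))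
      ≤ ∫ x in Set.Ioo a b,
          (d x * (2 * Real.sqrt (W x) * σ x) ^ 2 / W x + 4 * η1 * σ x ^ 2) := hmain
    _ = (∫ x in Set.Ioo a b, d x * (2 * Real.sqrt (W x) * σ x) ^ 2 / W x)
        + ∫ x in Set.Ioo a b, 4 * η1 * σ x ^ 2 :=
        integral_add hg1_int (hσ2.const_mul (4 * η1))
    _ ≤ Cen + 1 := by
        have h4 : (∫ x in Set.Ioo a b, 4 * η1 * σ x ^ 2)
            = 4 * η1 * ∫ x in Set.Ioo a b, σ x ^ 2 := integral_const_mul _ _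
        rw [h4]
        exact add_le_add hen hη1I

set_option maxHeartbeats 1000000 in
private lemma int2_bound
    (a b : ℝ) (hab : a < b) (d w₀ W DD : ℝ → ℝ) (ε η2 M₀ c : ℝ)
    (hd_cont : ContinuousOn d (Set.Icc a b))
    (hd_nonneg : ∀ x ∈ Set.Icc a b, 0 ≤ d x)
    (hd_C1 : ContDiffOn ℝ 1 d {x ∈ Set.Icc a b | 0 < d x})
    (hd_int : (∫⁻ x in Set.Ioo a b, (ENNReal.ofReal (d x))⁻¹) < ⊤)
    (hw₀_nonneg : ∀ x ∈ Set.Icc a b, 0 ≤ w₀ x)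
    (hM₀ : 0 ≤ M₀) (hw₀M : ∀ x ∈ Set.Icc a b, w₀ x ≤ M₀)
    (hgd_int : IntegrableOn (fun x => (deriv d x) ^ 2 / d x * w₀ x) (Set.Ioo a b))
    (hDDsm : ContDiffOn ℝ (⊤ : ℕ∞) DD (Set.Icc a b))
    (hDDge : ∀ x ∈ Set.Ioo a b, d x ≤ DD x)
    (hε : ε ∈ Set.Ioo (0:ℝ) 1)
    (hquart : Real.sqrt ε * (∫ x in Set.Ioo a b, (deriv DD x) ^ 4 / (DD x) ^ 2) ≤ 1)
    (K : Set ℝ) (hK : IsCompact K) (hKS : K ⊆ {x ∈ Set.Icc a b | 0 < d x})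
    (hWK : ∀ x : ℝ, W x ≠ 0 → x ∈ K)
    (hW_nonneg : ∀ x ∈ Set.Ioo a b, 0 ≤ W x)
    (hWle : ∀ x ∈ Set.Ioo a b, W x ≤ w₀ x)
    (hc : 0 < c) (hcK : ∀ x ∈ K, c ≤ d x)
    (hE : (∫ x in K, |deriv DD x - deriv d x| ^ 2) ≤ η2)
    (hη2 : 2 * M₀ / c * η2 ≤ 1) :
    (∫ x in Set.Ioo a b, (deriv DD x) ^ 2 / DD x * (W x + ε ^ ((1:ℝ)/4)))
      ≤ 2 * (∫ x in Set.Ioo a b, (deriv d x) ^ 2 / d x * w₀ x) + 3/2 + (b - a)/2 := by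
  have hε0 : (0:ℝ) < ε := hε.1
  set δ : ℝ := ε ^ ((1:ℝ)/4) with hδdef
  have hδ : 0 < δ := Real.rpow_pos_of_pos hε0 _
  have hδ2 : δ ^ 2 = Real.sqrt ε := by
    rw [hδdef, ← Real.rpow_natCast (ε ^ ((1:ℝ)/4)) 2, ← Real.rpow_mul hε0.le,
      Real.sqrt_eq_rpow]
    norm_num
  -- positivity of DD and lower bound
  have hDDpos : ∀ x ∈ Set.Icc a b, 0 < DD x :=
    dd_pos_aux a b hab d DD hd_nonneg hd_int hDDsm hDDge
  obtain ⟨x₀, hx₀, hx₀min⟩ :=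
    isCompact_Icc.exists_isMinOn (Set.nonempty_Icc.2 hab.le) hDDsm.continuousOn
  set cD : ℝ := DD x₀ with hcDdef
  have hcD : 0 < cD := hDDpos x₀ hx₀
  have hcDle : ∀ x ∈ Set.Icc a b, cD ≤ DD x := fun x hx => hx₀min hx
  -- derivative bounds
  obtain ⟨M2, hM2₀, hM2⟩ := deriv_bound_of_contDiffOn_Icc hab hDDsm
  obtain ⟨M1, hM1₀, hM1⟩ := deriv_d_bound_on_compact hab hd_cont hd_C1 hK hKS
  have hKmeas : MeasurableSet K := hK.isClosed.measurableSet
  have hKIcc : K ⊆ Set.Icc a b := fun x hx => (hKS hx).1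
  have hDDm : AEStronglyMeasurable DD (volume.restrict (Set.Ioo a b)) :=
    (hDDsm.continuousOn.mono Set.Ioo_subset_Icc_self).aestronglyMeasurable measurableSet_Ioo
  -- a.e. within K we are in Ioo
  have hKaeIoo : ∀ᵐ x ∂(volume.restrict K), x ∈ Set.Ioo a b := by
    rw [ae_restrict_iff' hKmeas]
    rw [ae_iff]
    refine measure_mono_null (fun x hx => ?_) (((Set.finite_singleton b).insert a).measure_zero volume)
    simp only [Set.mem_setOf_eq, not_forall, Classical.not_imp] at hx
    obtain ⟨hxK, hxI⟩ := hx
    have hxIcc := hKIcc hxK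
    simp only [Set.mem_Ioo, not_and_or, not_lt] at hxI
    rcases hxI with h | h
    · exact Or.inl (le_antisymm h hxIcc.1)
    · exact Or.inr (Set.mem_singleton_iff.2 (le_antisymm hxIcc.2 h))
  -- integrability of the squared derivative difference on K
  have hEmeas : Measurable (fun x => (deriv DD x - deriv d x) ^ 2) :=
    ((measurable_deriv DD).sub (measurable_deriv d)).pow_const 2
  have hEnonneg : ∀ x : ℝ, 0 ≤ (deriv DD x - deriv d x) ^ 2 := fun x => sq_nonneg _
  have hEint_K : IntegrableOn (fun x => (deriv DD x - deriv d x) ^ 2) K volume := by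
    refine Integrable.mono' (g := fun _ => (M2 + M1) ^ 2)
      (integrableOn_const hK.measure_lt_top.ne) hEmeas.aestronglyMeasurable ?_
    filter_upwards [hKaeIoo, ae_restrict_mem hKmeas] with x hxI hxK
    rw [Real.norm_eq_abs, abs_of_nonneg (hEnonneg x)]
    have h1 : |deriv DD x - deriv d x| ≤ M2 + M1 :=
      le_trans (abs_sub _ _) (add_le_add (hM2 x hxI) (hM1 x hxK hxI))
    calc (deriv DD x - deriv d x) ^ 2 = |deriv DD x - deriv d x| ^ 2 := (sq_abs _).symm
      _ ≤ (M2 + M1) ^ 2 := pow_le_pow_left₀ (abs_nonneg _) h1 2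
  have hEint_ind : Integrable (K.indicator (fun x => (deriv DD x - deriv d x) ^ 2))
      (volume.restrict (Set.Ioo a b)) := by
    rw [integrable_indicator_iff hKmeas]
    have : IntegrableOn (fun x => (deriv DD x - deriv d x) ^ 2) (K ∩ Set.Ioo a b) volume :=
      hEint_K.mono_set Set.inter_subset_left
    rwa [IntegrableOn, Measure.restrict_restrict hKmeas]
  -- integrability of the quartic term
  have hq_m : AEStronglyMeasurable (fun x => (deriv DD x) ^ 4 / (DD x) ^ 2)
      (volume.restrict (Set.Ioo a b)) :=
    (((measurable_deriv DD).pow_const 4).aemeasurable.div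
      (hDDm.aemeasurable.pow aemeasurable_const)).aestronglyMeasurable
  have hq_nonneg : ∀ x ∈ Set.Ioo a b, 0 ≤ (deriv DD x) ^ 4 / (DD x) ^ 2 := by
    intro x hx; positivity
  have hq_int : Integrable (fun x => (deriv DD x) ^ 4 / (DD x) ^ 2)
      (volume.restrict (Set.Ioo a b)) := by
    refine Integrable.mono' (g := fun _ => M2 ^ 4 / cD ^ 2)
      (integrableOn_const (by rw [Real.volume_Ioo]; exact ENNReal.ofReal_ne_top))
      hq_m ?_
    filter_upwards [ae_restrict_mem measurableSet_Ioo] with x hx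
    rw [Real.norm_eq_abs, abs_of_nonneg (hq_nonneg x hx)]
    have h1 : (deriv DD x) ^ 4 ≤ M2 ^ 4 := by
      have h2 : (deriv DD x) ^ 4 = |deriv DD x| ^ 4 := by
        rw [← abs_pow]
        exact (abs_of_nonneg (by positivity)).symm
      rw [h2]
      exact pow_le_pow_left₀ (abs_nonneg _) (hM2 x hx) 4
    have h3 : cD ^ 2 ≤ (DD x) ^ 2 := by
      have := hcDle x (Set.Ioo_subset_Icc_self hx)
      nlinarith [hcD]
    exact div_le_div₀ (by positivity) h1 (by positivity) h3
  -- the dominating function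
  have hg_int : Integrable (fun x =>
      2 * ((deriv d x) ^ 2 / d x * w₀ x)
        + (2 * M₀ / c) * K.indicator (fun y => (deriv DD y - deriv d y) ^ 2) x
        + Real.sqrt ε / 2 * ((deriv DD x) ^ 4 / (DD x) ^ 2) + 1 / 2)
      (volume.restrict (Set.Ioo a b)) := by
    refine Integrable.add (Integrable.add (Integrable.add ?_ ?_) ?_) ?_
    · exact hgd_int.const_mul 2
    · exact hEint_ind.const_mul _
    · exact hq_int.const_mul _
    · exact integrableOn_const (by rw [Real.volume_Ioo]; exact ENNReal.ofReal_ne_top)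
  -- pointwise comparison
  have hmain : (∫ x in Set.Ioo a b, (deriv DD x) ^ 2 / DD x * (W x + δ)) ≤
      ∫ x in Set.Ioo a b,
        (2 * ((deriv d x) ^ 2 / d x * w₀ x)
          + (2 * M₀ / c) * K.indicator (fun y => (deriv DD y - deriv d y) ^ 2) x
          + Real.sqrt ε / 2 * ((deriv DD x) ^ 4 / (DD x) ^ 2) + 1 / 2) := by
    refine integral_mono_of_nonneg ?_ hg_int ?_
    · filter_upwards [ae_restrict_mem measurableSet_Ioo] with x hx
      have hD : 0 < DD x := hDDpos x (Set.Ioo_subset_Icc_self hx)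
      have hWx : 0 ≤ W x := hW_nonneg x hx
      positivity
    · filter_upwards [ae_restrict_mem measurableSet_Ioo] with x hx
      have hxIcc := Set.Ioo_subset_Icc_self hx
      have hD : 0 < DD x := hDDpos x hxIcc
      have hWx : 0 ≤ W x := hW_nonneg x hx
      have hdx : 0 ≤ d x := hd_nonneg x hxIcc
      have hw₀x : 0 ≤ w₀ x := hw₀_nonneg x hxIcc
      set p := deriv DD x
      set q := deriv d x
      -- part B : the δ part
      have hXsq : (p ^ 2 / DD x) ^ 2 = p ^ 4 / (DD x) ^ 2 := by
        rw [div_pow, ← pow_mul]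
      have hX : 0 ≤ p ^ 2 / DD x := by positivity
      have hB : p ^ 2 / DD x * δ ≤ Real.sqrt ε / 2 * (p ^ 4 / (DD x) ^ 2) + 1 / 2 := by
        nlinarith [sq_nonneg (δ * (p ^ 2 / DD x) - 1), hδ2, hXsq]
      -- part A : the W part
      have hind_nonneg : 0 ≤ K.indicator (fun y => (deriv DD y - deriv d y) ^ 2) x :=
        Set.indicator_nonneg (fun y _ => sq_nonneg _) x
      have hgd_nonneg : 0 ≤ q ^ 2 / d x * w₀ x := by positivity
      have hA : p ^ 2 / DD x * W x ≤ 2 * (q ^ 2 / d x * w₀ x)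
          + (2 * M₀ / c) * K.indicator (fun y => (deriv DD y - deriv d y) ^ 2) x := by
        by_cases hW0 : W x = 0
        · rw [hW0, mul_zero]
          have h1 : 0 ≤ 2 * M₀ / c := by positivity
          exact add_nonneg (by linarith) (mul_nonneg h1 hind_nonneg)
        · have hxK : x ∈ K := hWK x hW0
          have hcd : c ≤ d x := hcK x hxK
          have hdpos : 0 < d x := lt_of_lt_of_le hc hcd
          have hdD : d x ≤ DD x := hDDge x hx
          have hind : K.indicator (fun y => (deriv DD y - deriv d y) ^ 2) x
              = (p - q) ^ 2 := Set.indicator_of_mem hxK _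
          have hWw : W x ≤ w₀ x := hWle x hx
          have hw₀M' : w₀ x ≤ M₀ := hw₀M x hxIcc
          have hp2 : p ^ 2 ≤ 2 * (p - q) ^ 2 + 2 * q ^ 2 := by
            nlinarith [sq_nonneg (p - 2 * q)]
          have step1 : p ^ 2 / DD x * W x ≤ (2 * (p - q) ^ 2 + 2 * q ^ 2) * W x / DD x := by
            rw [div_mul_eq_mul_div]
            exact (div_le_div_iff_of_pos_right hD).2 (mul_le_mul_of_nonneg_right hp2 hWx)
          have hWD : W x / DD x ≤ M₀ / c :=
            div_le_div₀ hM₀ (hWw.trans hw₀M') hc (le_trans hcd hdD)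
          have step3 : 2 * (p - q) ^ 2 * W x / DD x ≤ 2 * M₀ / c * (p - q) ^ 2 := by
            calc 2 * (p - q) ^ 2 * W x / DD x = 2 * (p - q) ^ 2 * (W x / DD x) := by ring
              _ ≤ 2 * (p - q) ^ 2 * (M₀ / c) :=
                  mul_le_mul_of_nonneg_left hWD (by positivity)
              _ = 2 * M₀ / c * (p - q) ^ 2 := by ring
          have step4 : 2 * q ^ 2 * W x / DD x ≤ 2 * (q ^ 2 / d x * w₀ x) := by
            have h4 : q ^ 2 * W x / DD x ≤ q ^ 2 * w₀ x / d x :=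
              div_le_div₀ (by positivity) (mul_le_mul_of_nonneg_left hWw (sq_nonneg q))
                hdpos hdD
            calc 2 * q ^ 2 * W x / DD x = 2 * (q ^ 2 * W x / DD x) := by ring
              _ ≤ 2 * (q ^ 2 * w₀ x / d x) := by linarith
              _ = 2 * (q ^ 2 / d x * w₀ x) := by ring
          have step2 : (2 * (p - q) ^ 2 + 2 * q ^ 2) * W x / DD x
              = 2 * (p - q) ^ 2 * W x / DD x + 2 * q ^ 2 * W x / DD x := by ring
          rw [hind]
          linarith [step1, step2 ▸ step1, step3, step4]
      show (deriv DD x) ^ 2 / DD x * (W x + δ) ≤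
          2 * ((deriv d x) ^ 2 / d x * w₀ x)
            + (2 * M₀ / c) * K.indicator (fun y => (deriv DD y - deriv d y) ^ 2) x
            + Real.sqrt ε / 2 * ((deriv DD x) ^ 4 / (DD x) ^ 2) + 1 / 2
      have hsplit : p ^ 2 / DD x * (W x + δ) = p ^ 2 / DD x * W x + p ^ 2 / DD x * δ := by
        ring
      rw [show (deriv DD x) ^ 2 / DD x * (W x + δ) = p ^ 2 / DD x * (W x + δ) from rfl,
        hsplit]
      linarith [hA, hB]
  -- evaluation of the dominating integral
  have hE' : (∫ x in K, (deriv DD x - deriv d x) ^ 2) ≤ η2 := by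
    have : (∫ x in K, (deriv DD x - deriv d x) ^ 2)
        = ∫ x in K, |deriv DD x - deriv d x| ^ 2 := by
      exact integral_congr_ae (Filter.Eventually.of_forall fun x => by simp [sq_abs])
    rw [this]; exact hE
  have hIndval : (∫ x in Set.Ioo a b,
      K.indicator (fun y => (deriv DD y - deriv d y) ^ 2) x) ≤ η2 := by
    rw [integral_indicator hKmeas]
    have hr : (volume.restrict (Set.Ioo a b)).restrict K
        = volume.restrict (K ∩ Set.Ioo a b) := Measure.restrict_restrict hKmeas
    calc (∫ x in K, (deriv DD x - deriv d x) ^ 2 ∂(volume.restrict (Set.Ioo a b)))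
        = ∫ x in K ∩ Set.Ioo a b, (deriv DD x - deriv d x) ^ 2 := by rw [hr]
      _ ≤ ∫ x in K, (deriv DD x - deriv d x) ^ 2 := by
          refine setIntegral_mono_set hEint_K ?_ ?_
          · exact Filter.Eventually.of_forall fun x => hEnonneg x
          · exact HasSubset.Subset.eventuallyLE Set.inter_subset_left
      _ ≤ η2 := hE'
  have hIndnonneg : 0 ≤ ∫ x in Set.Ioo a b,
      K.indicator (fun y => (deriv DD y - deriv d y) ^ 2) x :=
    setIntegral_nonneg measurableSet_Ioo
      (fun x _ => Set.indicator_nonneg (fun y _ => sq_nonneg _) x)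
  have hQnonneg : 0 ≤ ∫ x in Set.Ioo a b, (deriv DD x) ^ 4 / (DD x) ^ 2 :=
    setIntegral_nonneg measurableSet_Ioo hq_nonneg
  calc (∫ x in Set.Ioo a b, (deriv DD x) ^ 2 / DD x * (W x + δ))
      ≤ ∫ x in Set.Ioo a b,
          (2 * ((deriv d x) ^ 2 / d x * w₀ x)
            + (2 * M₀ / c) * K.indicator (fun y => (deriv DD y - deriv d y) ^ 2) x
            + Real.sqrt ε / 2 * ((deriv DD x) ^ 4 / (DD x) ^ 2) + 1 / 2) := hmain
    _ = (∫ x in Set.Ioo a b,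
          (2 * ((deriv d x) ^ 2 / d x * w₀ x)
            + (2 * M₀ / c) * K.indicator (fun y => (deriv DD y - deriv d y) ^ 2) x
            + Real.sqrt ε / 2 * ((deriv DD x) ^ 4 / (DD x) ^ 2)))
        + ∫ x in Set.Ioo a b, (1/2 : ℝ) :=
        integral_add (((hgd_int.const_mul 2).add (hEint_ind.const_mul _)).add
          (hq_int.const_mul _))
          (integrableOn_const (by rw [Real.volume_Ioo]; exact ENNReal.ofReal_ne_top))
    _ = (∫ x in Set.Ioo a b, 2 * ((deriv d x) ^ 2 / d x * w₀ x))
        + (∫ x in Set.Ioo a b,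
            (2 * M₀ / c) * K.indicator (fun y => (deriv DD y - deriv d y) ^ 2) x)
        + (∫ x in Set.Ioo a b, Real.sqrt ε / 2 * ((deriv DD x) ^ 4 / (DD x) ^ 2))
        + ∫ x in Set.Ioo a b, (1/2 : ℝ) := by
        have s2 : (∫ x in Set.Ioo a b,
            (2 * ((deriv d x) ^ 2 / d x * w₀ x)
              + (2 * M₀ / c) * K.indicator (fun y => (deriv DD y - deriv d y) ^ 2) x))
            = (∫ x in Set.Ioo a b, 2 * ((deriv d x) ^ 2 / d x * w₀ x))
              + ∫ x in Set.Ioo a b,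
                (2 * M₀ / c) * K.indicator (fun y => (deriv DD y - deriv d y) ^ 2) x :=
          integral_add (hgd_int.const_mul 2) (hEint_ind.const_mul _)
        have s1 : (∫ x in Set.Ioo a b,
            (2 * ((deriv d x) ^ 2 / d x * w₀ x)
              + (2 * M₀ / c) * K.indicator (fun y => (deriv DD y - deriv d y) ^ 2) x
              + Real.sqrt ε / 2 * ((deriv DD x) ^ 4 / (DD x) ^ 2)))
            = (∫ x in Set.Ioo a b,
                (2 * ((deriv d x) ^ 2 / d x * w₀ x)
                  + (2 * M₀ / c) * K.indicator (fun y => (deriv DD y - deriv d y) ^ 2) x))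
              + ∫ x in Set.Ioo a b, Real.sqrt ε / 2 * ((deriv DD x) ^ 4 / (DD x) ^ 2) :=
          integral_add ((hgd_int.const_mul 2).add (hEint_ind.const_mul _))
            (hq_int.const_mul _)
        rw [s1, s2]
    _ ≤ 2 * (∫ x in Set.Ioo a b, (deriv d x) ^ 2 / d x * w₀ x) + 3/2 + (b - a)/2 := by
        have e1 : (∫ x in Set.Ioo a b, 2 * ((deriv d x) ^ 2 / d x * w₀ x))
            = 2 * ∫ x in Set.Ioo a b, (deriv d x) ^ 2 / d x * w₀ x := integral_const_mul _ _
        have e2 : (∫ x in Set.Ioo a b,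
            (2 * M₀ / c) * K.indicator (fun y => (deriv DD y - deriv d y) ^ 2) x)
            = (2 * M₀ / c) * ∫ x in Set.Ioo a b,
              K.indicator (fun y => (deriv DD y - deriv d y) ^ 2) x := integral_const_mul _ _
        have e3 : (∫ x in Set.Ioo a b, Real.sqrt ε / 2 * ((deriv DD x) ^ 4 / (DD x) ^ 2))
            = Real.sqrt ε / 2 * ∫ x in Set.Ioo a b, (deriv DD x) ^ 4 / (DD x) ^ 2 :=
            integral_const_mul _ _
        have e4 : (∫ x in Set.Ioo a b, (1/2 : ℝ)) = (b - a) / 2 := by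
          rw [setIntegral_const, Real.volume_real_Ioo_of_le hab.le,
            smul_eq_mul]
          ring
        have b2 : (2 * M₀ / c) * (∫ x in Set.Ioo a b,
            K.indicator (fun y => (deriv DD y - deriv d y) ^ 2) x) ≤ 1 :=
          le_trans (mul_le_mul_of_nonneg_left hIndval (by positivity)) hη2
        have b3 : Real.sqrt ε / 2 * (∫ x in Set.Ioo a b, (deriv DD x) ^ 4 / (DD x) ^ 2)
            ≤ 1 / 2 := by linarith [hquart]
        rw [e1, e2, e3, e4]
        linarith

set_option maxHeartbeats 1600000

/-- Lemma `lem45`: selection of a sequence `ε_j ↘ 0` such that, with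
`w_{0ε_j} := w_{0j} + ε_j^{1/4}`, the two energy-relevant integrals
`∫_Ω d_{ε_j} (w_{0ε_j x})²/w_{0ε_j}` and `∫_Ω (d_{ε_j x}²/d_{ε_j}) w_{0ε_j}`
are bounded by a constant `C` uniformly in `j`.  Here the weak derivative of
`√w_{0j}` is `s j`, so that `w_{0ε_j x} = w_{0jx} = 2 √w_{0j} · s j`. -/
theorem stmt_7
    (a b : ℝ) (hab : a < b)
    (d : ℝ → ℝ)
    (hd_cont : ContinuousOn d (Set.Icc a b))
    (hd_nonneg : ∀ x ∈ Set.Icc a b, 0 ≤ d x)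
    (hd_C1 : ContDiffOn ℝ 1 d {x ∈ Set.Icc a b | 0 < d x})
    (hd_int : (∫⁻ x in Set.Ioo a b, (ENNReal.ofReal (d x))⁻¹) < ⊤)
    (w₀ : ℝ → ℝ)
    (hw₀_cont : ContinuousOn w₀ (Set.Icc a b))
    (hw₀_nonneg : ∀ x ∈ Set.Icc a b, 0 ≤ w₀ x)
    (hw₀_sqrt : ∃ s₀ : ℝ → ℝ,
        MemLp (fun x => Real.sqrt (w₀ x)) 2 (volume.restrict (Set.Ioo a b)) ∧
        MemLp s₀ 2 (volume.restrict (Set.Ioo a b)) ∧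
        IsWeakDerivOn a b (fun x => Real.sqrt (w₀ x)) s₀)
    (hw₀d : (∫⁻ x in Set.Ioo a b, ENNReal.ofReal ((deriv d x) ^ 2 / d x * w₀ x)) < ⊤)
    -- the family (d_ε)
    (dd : ℝ → ℝ → ℝ)
    (hdd_smooth : ∀ ε ∈ Set.Ioo (0:ℝ) 1, ContDiffOn ℝ (⊤ : ℕ∞) (dd ε) (Set.Icc a b))
    (hdd_ge : ∀ ε ∈ Set.Ioo (0:ℝ) 1, ∀ x ∈ Set.Ioo a b, d x ≤ dd ε x)
    (hdd_conv : ∀ η > (0:ℝ), ∃ ε₀ ∈ Set.Ioo (0:ℝ) 1, ∀ ε ∈ Set.Ioo (0:ℝ) 1, ε ≤ ε₀ →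
        ∀ x ∈ Set.Icc a b, |dd ε x - d x| ≤ η)
    (hdd_deriv_conv : ∀ K : Set ℝ, IsCompact K → K ⊆ {x ∈ Set.Icc a b | 0 < d x} →
        ∀ η > (0:ℝ), ∃ ε₀ ∈ Set.Ioo (0:ℝ) 1, ∀ ε ∈ Set.Ioo (0:ℝ) 1, ε ≤ ε₀ →
          (∫ x in K, |deriv (dd ε) x - deriv d x| ^ 2) ≤ η)
    (hdd_quart : ∀ ε ∈ Set.Ioo (0:ℝ) 1,
        Real.sqrt ε * (∫ x in Set.Ioo a b, (deriv (dd ε) x) ^ 4 / (dd ε x) ^ 2) ≤ 1)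
    -- the sequence (w_{0j}) with weak derivatives of the square roots
    (w0 : ℕ → ℝ → ℝ) (s : ℕ → ℝ → ℝ)
    (hw0_bdd : ∀ j : ℕ, ∃ C : ℝ, ∀ x ∈ Set.Ioo a b, w0 j x ≤ C)
    (hw0_nonneg : ∀ j : ℕ, ∀ x ∈ Set.Ioo a b, 0 ≤ w0 j x)
    (hw0_sqrt : ∀ j : ℕ,
        MemLp (fun x => Real.sqrt (w0 j x)) 2 (volume.restrict (Set.Ioo a b)) ∧
        MemLp (s j) 2 (volume.restrict (Set.Ioo a b)) ∧
        IsWeakDerivOn a b (fun x => Real.sqrt (w0 j x)) (s j))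
    (hw0_supp : ∀ j : ℕ, tsupport (w0 j) ⊆ {x ∈ Set.Icc a b | 0 < d x})
    (hw0_mono : ∀ x ∈ Set.Ioo a b, Monotone (fun j => w0 j x) ∧
        Tendsto (fun j => w0 j x) atTop (nhds (w₀ x)))
    (hw0_en : ∃ C : ℝ, ∀ j : ℕ,
        (∫ x in Set.Ioo a b, d x * (2 * Real.sqrt (w0 j x) * s j x) ^ 2 / w0 j x) ≤ C) :
    ∃ εs : ℕ → ℝ, (∀ j : ℕ, εs j ∈ Set.Ioo (0:ℝ) 1) ∧ Antitone εs ∧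
      Tendsto εs atTop (nhds 0) ∧
      ∃ C > (0:ℝ), ∀ j : ℕ,
        (∫ x in Set.Ioo a b,
            dd (εs j) x * (2 * Real.sqrt (w0 j x) * s j x) ^ 2
              / (w0 j x + (εs j) ^ ((1:ℝ)/4))) ≤ C ∧
        (∫ x in Set.Ioo a b,
            (deriv (dd (εs j)) x) ^ 2 / dd (εs j) x
              * (w0 j x + (εs j) ^ ((1:ℝ)/4))) ≤ C := by
  classical
  obtain ⟨Cen, hCen⟩ := hw0_en
  -- global constants
  obtain ⟨Md, hMd'⟩ := isCompact_Icc.exists_bound_of_continuousOn hd_cont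
  have hMd : ∀ x ∈ Set.Icc a b, d x ≤ Md := fun x hx =>
    le_trans (le_abs_self _) (by rw [← Real.norm_eq_abs]; exact hMd' x hx)
  obtain ⟨M₀', hM₀'⟩ := isCompact_Icc.exists_bound_of_continuousOn hw₀_cont
  set M₀ : ℝ := max M₀' 0 with hM₀def
  have hM₀ : 0 ≤ M₀ := le_max_right _ _
  have hw₀M : ∀ x ∈ Set.Icc a b, w₀ x ≤ M₀ := fun x hx =>
    le_trans (le_abs_self _) (le_trans (by rw [← Real.norm_eq_abs]; exact hM₀' x hx)
      (le_max_left _ _))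
  -- integrability of the limit energy integrand
  have hdm : AEStronglyMeasurable d (volume.restrict (Set.Ioo a b)) :=
    (hd_cont.mono Set.Ioo_subset_Icc_self).aestronglyMeasurable measurableSet_Ioo
  have hw₀m : AEStronglyMeasurable w₀ (volume.restrict (Set.Ioo a b)) :=
    (hw₀_cont.mono Set.Ioo_subset_Icc_self).aestronglyMeasurable measurableSet_Ioo
  have hgd_nonneg : ∀ x ∈ Set.Ioo a b, 0 ≤ (deriv d x) ^ 2 / d x * w₀ x := by
    intro x hx
    have := hd_nonneg x (Set.Ioo_subset_Icc_self hx)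
    have := hw₀_nonneg x (Set.Ioo_subset_Icc_self hx)
    positivity
  have hgd_int : IntegrableOn (fun x => (deriv d x) ^ 2 / d x * w₀ x) (Set.Ioo a b) := by
    constructor
    · exact ((((measurable_deriv d).pow_const 2).aemeasurable.div
        hdm.aemeasurable).mul hw₀m.aemeasurable).aestronglyMeasurable
    · rw [hasFiniteIntegral_iff_ofReal]
      · exact hw₀d
      · filter_upwards [ae_restrict_mem measurableSet_Ioo] with x hx
        exact hgd_nonneg x hx
  set A₀ : ℝ := ∫ x in Set.Ioo a b, (deriv d x) ^ 2 / d x * w₀ x with hA₀def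
  have hA₀ : 0 ≤ A₀ := setIntegral_nonneg measurableSet_Ioo hgd_nonneg
  have hCen0 : 0 ≤ Cen := by
    refine le_trans (setIntegral_nonneg measurableSet_Ioo fun x hx => ?_) (hCen 0)
    exact div_nonneg (mul_nonneg (hd_nonneg x (Set.Ioo_subset_Icc_self hx)) (sq_nonneg _))
      (hw0_nonneg 0 x hx)
  -- compact supports and positive lower bounds of d on them
  have hKcomp : ∀ j, IsCompact (tsupport (w0 j)) := fun j =>
    Metric.isCompact_of_isClosed_isBounded (isClosed_tsupport _)
      ((Metric.isBounded_Icc a b).subset (fun x hx => (hw0_supp j hx).1))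
  have hcex : ∀ j : ℕ, ∃ cc : ℝ, 0 < cc ∧ ∀ x ∈ tsupport (w0 j), cc ≤ d x := by
    intro j
    rcases (tsupport (w0 j)).eq_empty_or_nonempty with he | hne
    · exact ⟨1, one_pos, fun x hx => absurd hx (by rw [he]; exact Set.notMem_empty x)⟩
    · obtain ⟨z, hz, hzmin⟩ := (hKcomp j).exists_isMinOn hne
        (hd_cont.mono (fun x hx => (hw0_supp j hx).1))
      exact ⟨d z, (hw0_supp j hz).2, fun x hx => hzmin hx⟩
  choose cc hccpos hccle using hcex
  -- per-j smallness parameters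
  set Ij : ℕ → ℝ := fun j => ∫ x in Set.Ioo a b, (s j x) ^ 2 with hIjdef
  have hIj : ∀ j, 0 ≤ Ij j := fun j =>
    setIntegral_nonneg measurableSet_Ioo (fun x _ => sq_nonneg _)
  set η1 : ℕ → ℝ := fun j => 1 / (4 * Ij j + 1) with hη1def
  have hη1pos : ∀ j, 0 < η1 j := fun j => by
    have := hIj j
    positivity
  have hη1I : ∀ j, 4 * η1 j * Ij j ≤ 1 := by
    intro j
    have h0 := hIj j
    have h1 : (0:ℝ) < 4 * Ij j + 1 := by linarith
    have : 4 * η1 j * Ij j = 4 * Ij j / (4 * Ij j + 1) := by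
      rw [hη1def]; field_simp
    rw [this]
    exact div_le_one_of_le₀ (by linarith) (by linarith)
  set η2 : ℕ → ℝ := fun j => cc j / (2 * M₀ + 2) with hη2def
  have hη2pos : ∀ j, 0 < η2 j := fun j => div_pos (hccpos j) (by linarith)
  have hη2le : ∀ j, 2 * M₀ / cc j * η2 j ≤ 1 := by
    intro j
    have hcne : cc j ≠ 0 := (hccpos j).ne'
    have h1 : (0:ℝ) < 2 * M₀ + 2 := by linarith
    have : 2 * M₀ / cc j * η2 j = 2 * M₀ / (2 * M₀ + 2) := by
      rw [hη2def]
      field_simp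
    rw [this]
    exact div_le_one_of_le₀ (by linarith) (by linarith)
  -- choice of ε for each j, below any prescribed threshold
  have heps : ∀ j : ℕ, ∀ e₀ : ℝ, ∃ ε : ℝ, ε ∈ Set.Ioo (0:ℝ) 1 ∧
      (e₀ ∈ Set.Ioo (0:ℝ) 1 → ε ≤ e₀) ∧
      (∀ x ∈ Set.Icc a b, |dd ε x - d x| ≤ η1 j) ∧
      ((∫ x in tsupport (w0 j), |deriv (dd ε) x - deriv d x| ^ 2) ≤ η2 j) := by
    intro j e₀
    obtain ⟨ε₁, hε₁, h₁⟩ := hdd_conv (η1 j) (hη1pos j)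
    obtain ⟨ε₂, hε₂, h₂⟩ := hdd_deriv_conv (tsupport (w0 j)) (hKcomp j) (hw0_supp j)
      (η2 j) (hη2pos j)
    by_cases he₀ : e₀ ∈ Set.Ioo (0:ℝ) 1
    · have hmem : min ε₁ (min ε₂ e₀) ∈ Set.Ioo (0:ℝ) 1 :=
        ⟨lt_min hε₁.1 (lt_min hε₂.1 he₀.1), lt_of_le_of_lt (min_le_left _ _) hε₁.2⟩
      refine ⟨min ε₁ (min ε₂ e₀), hmem, fun _ => le_trans (min_le_right _ _)
        (min_le_right _ _), h₁ _ hmem (min_le_left _ _), h₂ _ hmem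
        (le_trans (min_le_right _ _) (min_le_left _ _))⟩
    · have hmem : min ε₁ ε₂ ∈ Set.Ioo (0:ℝ) 1 :=
        ⟨lt_min hε₁.1 hε₂.1, lt_of_le_of_lt (min_le_left _ _) hε₁.2⟩
      exact ⟨min ε₁ ε₂, hmem, fun h => absurd h he₀, h₁ _ hmem (min_le_left _ _),
        h₂ _ hmem (min_le_right _ _)⟩
  choose F hF1 hF2 hF3 hF4 using heps
  -- the recursive sequence
  set εs : ℕ → ℝ := fun n =>
    Nat.rec (F 0 (1/2)) (fun k ih => F (k+1) (min ih (1/(k+3:ℝ)))) n with hεsdef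
  have hεs0 : εs 0 = F 0 (1/2) := rfl
  have hεsS : ∀ k : ℕ, εs (k+1) = F (k+1) (min (εs k) (1/(k+3:ℝ))) := fun k => rfl
  have hmem : ∀ j, εs j ∈ Set.Ioo (0:ℝ) 1 := by
    intro j
    cases j with
    | zero => rw [hεs0]; exact hF1 0 _
    | succ k => rw [hεsS k]; exact hF1 (k+1) _
  have harg : ∀ j : ℕ, min (εs j) (1/(j+3:ℝ)) ∈ Set.Ioo (0:ℝ) 1 := fun j =>
    ⟨lt_min (hmem j).1 (by positivity), lt_of_le_of_lt (min_le_left _ _) (hmem j).2⟩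
  have hsucc : ∀ j : ℕ, εs (j+1) ≤ min (εs j) (1/(j+3:ℝ)) := fun j => by
    rw [hεsS j]; exact hF2 (j+1) _ (harg j)
  have hanti : Antitone εs :=
    antitone_nat_of_succ_le fun j => le_trans (hsucc j) (min_le_left _ _)
  have hbnd : ∀ j : ℕ, εs j ≤ 1/(j+1:ℝ) := by
    intro j
    cases j with
    | zero =>
      rw [hεs0]
      have := hF2 0 (1/2) (by norm_num)
      simpa using le_trans this (by norm_num)
    | succ k =>
      refine le_trans (le_trans (hsucc k) (min_le_right _ _)) ?_
      rw [div_le_div_iff₀ (by positivity) (by positivity)]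
      push_cast
      linarith
  have htend : Tendsto εs atTop (nhds 0) := by
    refine squeeze_zero (fun j => (hmem j).1.le) hbnd ?_
    exact tendsto_one_div_add_atTop_nhds_zero_nat
  have hprop : ∀ j : ℕ,
      (∀ x ∈ Set.Icc a b, |dd (εs j) x - d x| ≤ η1 j) ∧
      ((∫ x in tsupport (w0 j), |deriv (dd (εs j)) x - deriv d x| ^ 2) ≤ η2 j) := by
    intro j
    cases j with
    | zero => rw [hεs0]; exact ⟨hF3 0 _, hF4 0 _⟩
    | succ k => rw [hεsS k]; exact ⟨hF3 (k+1) _, hF4 (k+1) _⟩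
  -- the uniform constant
  refine ⟨εs, hmem, hanti, htend, (Cen + 1) + (2 * A₀ + 3/2 + (b-a)/2), by linarith,
    fun j => ⟨?_, ?_⟩⟩
  · -- first integral
    have h1 := int1_bound a b hab d (w0 j) (s j) (dd (εs j)) (εs j) (η1 j) Md Cen
      hd_nonneg hd_cont hMd (hw0_nonneg j) (hw0_sqrt j).1 (hw0_sqrt j).2.1 (hCen j)
      (hmem j).1 (hdd_ge (εs j) (hmem j)) (hprop j).1 (hη1pos j).le (by
        have := hη1I j
        rw [hIjdef] at this
        exact this)
    have hrest : 0 ≤ 2 * A₀ + 3/2 + (b-a)/2 := by linarith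
    linarith
  · -- second integral
    have h2 := int2_bound a b hab d w₀ (w0 j) (dd (εs j)) (εs j) (η2 j) M₀ (cc j)
      hd_cont hd_nonneg hd_C1 hd_int hw₀_nonneg hM₀ hw₀M hgd_int
      (hdd_smooth (εs j) (hmem j)) (hdd_ge (εs j) (hmem j)) (hmem j)
      (hdd_quart (εs j) (hmem j)) (tsupport (w0 j)) (hKcomp j) (hw0_supp j)
      (fun x hx => subset_tsupport _ hx)
      (hw0_nonneg j)
      (fun x hx => Monotone.ge_of_tendsto (hw0_mono x hx).1 (hw0_mono x hx).2 j)
      (hccpos j) (hccle j) (hprop j).2 (hη2le j)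
    rw [← hA₀def] at h2
    linarith
end

section
/- Let K > 0. For every η > 0 there exists δ > 0 (depending only on η, K and d) such that every measurable function f: Ω → [0,∞) satisfying ∫_Ω f · |ln(d f)| ≤ K fulfills ∫_E f ≤ η for every measurable set E ⊆ Ω with |E| ≤ δ. -/
open MeasureTheory Set ENNReal

/-!
Fix a threshold `t > 0`. Where `d f ≤ exp t` we have `f ≤ exp t / d`, and where `d f > exp t`
we have `|ln (d f)| > t`, so `f ≤ f |ln (d f)| / t`. Hence
`∫_E f ≤ exp t ∫_E 1/d + K / t`. Taking `t = 2K/η` makes the second term `η/2`, and absolute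
continuity of the integrable function `1/d` makes the first one `≤ η/2` once `|E|` is small.
-/

noncomputable def entropyDensity (d f : ℝ) : ℝ≥0∞ :=
  if f = 0 then 0 else if d * f = 0 then ⊤ else ENNReal.ofReal (f * |Real.log (d * f)|)

theorem ofReal_le_mul_inv_add_entropyDensity_div {d f t : ℝ} (ht : 0 < t) :
    ENNReal.ofReal f ≤
      ENNReal.ofReal (Real.exp t) * (ENNReal.ofReal d)⁻¹ + entropyDensity d f / ENNReal.ofReal t := by
  rcases le_or_gt f 0 with hf | hf
  · simp [ENNReal.ofReal_of_nonpos hf]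
  rcases le_or_gt d 0 with hd | hd
  · rw [ENNReal.ofReal_of_nonpos hd, ENNReal.inv_zero,
      ENNReal.mul_top (by simpa using Real.exp_pos t), top_add]
    exact le_top
  have hdf : 0 < d * f := mul_pos hd hf
  have hF : entropyDensity d f = ENNReal.ofReal (f * |Real.log (d * f)|) := by
    simp [entropyDensity, hf.ne', hdf.ne']
  rcases le_or_gt (d * f) (Real.exp t) with hsmall | hlarge
  · have hfle : f ≤ Real.exp t * d⁻¹ := by
      rw [le_mul_inv_iff₀ hd, mul_comm]
      exact hsmall
    calc ENNReal.ofReal f ≤ ENNReal.ofReal (Real.exp t * d⁻¹) := ENNReal.ofReal_le_ofReal hfle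
      _ = ENNReal.ofReal (Real.exp t) * (ENNReal.ofReal d)⁻¹ := by
        rw [ENNReal.ofReal_mul (Real.exp_pos t).le, ENNReal.ofReal_inv_of_pos hd]
      _ ≤ _ := le_self_add
  · have hlog : t ≤ |Real.log (d * f)| :=
      ((Real.lt_log_iff_exp_lt hdf).2 hlarge).le.trans (le_abs_self _)
    have hft : ENNReal.ofReal f ≤ entropyDensity d f / ENNReal.ofReal t := by
      rw [ENNReal.le_div_iff_mul_le (Or.inl (by simpa using ht)) (Or.inl ofReal_ne_top), hF,
        ← ENNReal.ofReal_mul hf.le]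
      exact ENNReal.ofReal_le_ofReal (mul_le_mul_of_nonneg_left hlog hf.le)
    exact hft.trans le_add_self

section

variable {α : Type*} [MeasurableSpace α] {μ : Measure α} {d : α → ℝ}

theorem lintegral_ofReal_le_of_entropy (hd : Measurable d) (f : α → ℝ) {t : ℝ} (ht : 0 < t) :
    ∫⁻ x, ENNReal.ofReal (f x) ∂μ ≤
      ENNReal.ofReal (Real.exp t) * ∫⁻ x, (ENNReal.ofReal (d x))⁻¹ ∂μ +
        (∫⁻ x, entropyDensity (d x) (f x) ∂μ) / ENNReal.ofReal t := by
  have hinv : Measurable fun x => (ENNReal.ofReal (d x))⁻¹ := hd.ennreal_ofReal.inv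
  calc ∫⁻ x, ENNReal.ofReal (f x) ∂μ
      ≤ ∫⁻ x, (ENNReal.ofReal (Real.exp t) * (ENNReal.ofReal (d x))⁻¹ +
          entropyDensity (d x) (f x) / ENNReal.ofReal t) ∂μ :=
        lintegral_mono fun x => ofReal_le_mul_inv_add_entropyDensity_div ht
    _ = _ := by
        simp only [div_eq_mul_inv]
        rw [lintegral_add_left (hinv.const_mul _), lintegral_const_mul _ hinv,
          lintegral_mul_const' _ _ (by simpa using ht)]

theorem exists_pos_forall_setLIntegral_le_of_entropy_le (hd : Measurable d)
    (hd_int : ∫⁻ x, (ENNReal.ofReal (d x))⁻¹ ∂μ ≠ ⊤) {K η : ℝ} (hK : 0 < K) (hη : 0 < η) :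
    ∃ δ > 0, ∀ f : α → ℝ, ∫⁻ x, entropyDensity (d x) (f x) ∂μ ≤ ENNReal.ofReal K →
      ∀ E, μ E < δ → ∫⁻ x in E, ENNReal.ofReal (f x) ∂μ ≤ ENNReal.ofReal η := by
  set t := 2 * K / η
  have ht : 0 < t := by positivity
  have hε : ENNReal.ofReal (η / 2) / ENNReal.ofReal (Real.exp t) ≠ 0 := by
    simp [hη]
  obtain ⟨δ, hδ, hsmall⟩ := exists_pos_setLIntegral_lt_of_measure_lt hd_int hε
  refine ⟨δ, hδ, fun f hf E hE => ?_⟩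
  have hfirst : ENNReal.ofReal (Real.exp t) * ∫⁻ x in E, (ENNReal.ofReal (d x))⁻¹ ∂μ ≤
      ENNReal.ofReal (η / 2) :=
    (mul_le_mul_right (hsmall E hE).le _).trans ENNReal.mul_div_le
  have hsecond : (∫⁻ x in E, entropyDensity (d x) (f x) ∂μ) / ENNReal.ofReal t ≤
      ENNReal.ofReal (η / 2) :=
    calc (∫⁻ x in E, entropyDensity (d x) (f x) ∂μ) / ENNReal.ofReal t
        ≤ ENNReal.ofReal K / ENNReal.ofReal t := by
          gcongr
          exact (setLIntegral_le_lintegral E _).trans hf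
      _ = ENNReal.ofReal (η / 2) := by
          rw [← ENNReal.ofReal_div_of_pos ht]
          congr 1
          simp only [t]
          field_simp
  calc ∫⁻ x in E, ENNReal.ofReal (f x) ∂μ
      ≤ ENNReal.ofReal (η / 2) + ENNReal.ofReal (η / 2) :=
        (lintegral_ofReal_le_of_entropy hd f ht).trans (add_le_add hfirst hsecond)
    _ = ENNReal.ofReal η := by
        rw [← ENNReal.ofReal_add (by positivity) (by positivity), add_halves]

end

theorem stmt_16_general
    (a b : ℝ)
    (d : ℝ → ℝ) (hd_meas : Measurable d)
    (hd_int : (∫⁻ x in Set.Ioo a b, (ENNReal.ofReal (d x))⁻¹) < ⊤)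
    (K : ℝ) (hK : 0 < K) :
    ∀ η > (0:ℝ), ∃ δ > (0:ℝ), ∀ f : ℝ → ℝ, Measurable f →
      (∀ x ∈ Set.Ioo a b, 0 ≤ f x) →
      (∫⁻ x in Set.Ioo a b,
          (if f x = 0 then 0
           else if d x * f x = 0 then ⊤
           else ENNReal.ofReal (f x * |Real.log (d x * f x)|)) : ℝ≥0∞) ≤ ENNReal.ofReal K →
      ∀ E : Set ℝ, MeasurableSet E → E ⊆ Set.Ioo a b → volume E ≤ ENNReal.ofReal δ →
        (∫⁻ x in E, ENNReal.ofReal (f x)) ≤ ENNReal.ofReal η := by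
  intro η hη
  obtain ⟨δ₀, hδ₀, hsmall⟩ :=
    exists_pos_forall_setLIntegral_le_of_entropy_le hd_meas hd_int.ne hK hη
  obtain ⟨δ, -, hδ, hδδ₀⟩ := ENNReal.lt_iff_exists_real_btwn.1 hδ₀
  refine ⟨δ, ENNReal.ofReal_pos.1 hδ, fun f _ _ hf E _ hEsub hEvol => ?_⟩
  rw [← Measure.restrict_restrict_of_subset hEsub]
  exact hsmall f hf E ((Measure.restrict_apply_le _ _).trans_lt (hEvol.trans_lt hδδ₀))

/-- Uniform equi-integrability from an entropy bound (cf. Lemma `lem826`):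
if `∫_Ω f |ln(d f)| ≤ K` then the integrals of `f` over small sets are uniformly small.
The integrand `f·|ln(d f)|` is interpreted as `0` where `f = 0` and as `+∞` where
`f > 0` and `d·f = 0`. -/
theorem stmt_16
    (a b : ℝ) (hab : a < b)
    (d : ℝ → ℝ) (hd_meas : Measurable d)
    (hd_nonneg : ∀ x ∈ Set.Ioo a b, 0 ≤ d x)
    (hd_int : (∫⁻ x in Set.Ioo a b, (ENNReal.ofReal (d x))⁻¹) < ⊤)
    (K : ℝ) (hK : 0 < K) :
    ∀ η > (0:ℝ), ∃ δ > (0:ℝ), ∀ f : ℝ → ℝ, Measurable f →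
      (∀ x ∈ Set.Ioo a b, 0 ≤ f x) →
      (∫⁻ x in Set.Ioo a b,
          (if f x = 0 then 0
           else if d x * f x = 0 then ⊤
           else ENNReal.ofReal (f x * |Real.log (d x * f x)|)) : ℝ≥0∞) ≤ ENNReal.ofReal K →
      ∀ E : Set ℝ, MeasurableSet E → E ⊆ Set.Ioo a b → volume E ≤ ENNReal.ofReal δ →
        (∫⁻ x in E, ENNReal.ofReal (f x)) ≤ ENNReal.ofReal η :=
  stmt_16_general a b d hd_meas hd_int K hK
end

section
/- Let T > 0, let y ∈ C⁰([0,T)) ∩ C¹((0,T)), let a > 0, and let h ∈ L¹((0,T)) ∩ C⁰((0,T)) be nonnegative. If y'(t) + a·(y(t))₊² ≤ h(t) for all t ∈ (0,T), where (ξ)₊ := max{ξ,0}, then y(t) ≤ 1/(a t) + ∫₀^t h(s) ds for all t ∈ (0,T). -/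
/-!
Subtracting the primitive `H s = ∫₀ˢ h` gives `w = y - H ≤ y` with `w' + A (w)₊² ≤ 0`, a Riccati
inequality with no source term. Such a `w` is decreasing, and once `w t > 0` it stays positive on
`(0, t]`, where `A x - 1 / w x` is decreasing too; comparing `x = t` with `x → 0⁺` gives
`A t ≤ 1 / w t`.
-/

open MeasureTheory Set Filter Topology

lemma antitoneOn_Icc_of_hasDerivAt_nonpos {f f' : ℝ → ℝ} {a b : ℝ}
    (hf : ∀ x ∈ Icc a b, HasDerivAt f (f' x) x) (hf' : ∀ x ∈ Ioo a b, f' x ≤ 0) :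
    AntitoneOn f (Icc a b) :=
  antitoneOn_of_hasDerivWithinAt_nonpos (convex_Icc a b)
    (fun x hx ↦ (hf x hx).continuousAt.continuousWithinAt)
    (fun x hx ↦ by
      rw [interior_Icc] at hx ⊢
      exact (hf x (Ioo_subset_Icc_self hx)).hasDerivWithinAt)
    (fun x hx ↦ by rw [interior_Icc] at hx; exact hf' x hx)

section Riccati

variable {w w' : ℝ → ℝ} {A s t : ℝ}

lemma antitoneOn_of_hasDerivAt_add_sq_nonpos (hA : 0 ≤ A)
    (hw : ∀ x ∈ Icc s t, HasDerivAt w (w' x) x)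
    (hineq : ∀ x ∈ Icc s t, w' x + A * max (w x) 0 ^ 2 ≤ 0) :
    AntitoneOn w (Icc s t) :=
  antitoneOn_Icc_of_hasDerivAt_nonpos hw fun x hx ↦ by
    nlinarith [hineq x (Ioo_subset_Icc_self hx), sq_nonneg (max (w x) 0)]

/-- The solution `1 / (A (x - c))` of `w' = -A w²` makes `A x - 1 / w x` constant. -/
lemma antitoneOn_mul_sub_inv_of_hasDerivAt_add_sq_nonpos
    (hw : ∀ x ∈ Icc s t, HasDerivAt w (w' x) x) (hpos : ∀ x ∈ Icc s t, 0 < w x)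
    (hineq : ∀ x ∈ Icc s t, w' x + A * max (w x) 0 ^ 2 ≤ 0) :
    AntitoneOn (fun x ↦ A * x - (w x)⁻¹) (Icc s t) := by
  refine antitoneOn_Icc_of_hasDerivAt_nonpos
    (fun x hx ↦ ((hasDerivAt_id x).const_mul A).sub ((hw x hx).inv (hpos x hx).ne')) ?_
  intro x hx
  have hx' := Ioo_subset_Icc_self hx
  have hwx := hpos x hx'
  have hwx' := hineq x hx'
  rw [max_eq_left hwx.le] at hwx'
  rw [mul_one, sub_nonpos, neg_div, le_neg, div_le_iff₀ (by positivity)]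
  linarith

lemma le_one_div_mul_of_hasDerivAt_add_sq_nonpos (hA : 0 < A) (ht : 0 < t)
    (hw : ∀ x ∈ Ioc 0 t, HasDerivAt w (w' x) x)
    (hineq : ∀ x ∈ Ioc 0 t, w' x + A * max (w x) 0 ^ 2 ≤ 0) :
    w t ≤ 1 / (A * t) := by
  rcases le_or_gt (w t) 0 with hwt | hwt
  · exact hwt.trans (by positivity)
  have key : ∀ s ∈ Ioo 0 t, A * t - (w t)⁻¹ ≤ A * s := by
    intro s hs
    have hsub : Icc s t ⊆ Ioc 0 t := Icc_subset_Ioc_iff hs.2.le |>.mpr ⟨hs.1, le_rfl⟩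
    have hpos : ∀ x ∈ Icc s t, 0 < w x := fun x hx ↦
      hwt.trans_le (antitoneOn_of_hasDerivAt_add_sq_nonpos hA.le (fun x hx ↦ hw x (hsub hx))
        (fun x hx ↦ hineq x (hsub hx)) hx (right_mem_Icc.2 hs.2.le) hx.2)
    have hφ : A * t - (w t)⁻¹ ≤ A * s - (w s)⁻¹ :=
      antitoneOn_mul_sub_inv_of_hasDerivAt_add_sq_nonpos (fun x hx ↦ hw x (hsub hx)) hpos
        (fun x hx ↦ hineq x (hsub hx)) (left_mem_Icc.2 hs.2.le) (right_mem_Icc.2 hs.2.le) hs.2.le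
    linarith [inv_pos.2 (hpos s (left_mem_Icc.2 hs.2.le))]
  have hAt : A * t ≤ (w t)⁻¹ := by
    have hlim : Tendsto (fun s ↦ A * s) (𝓝[>] 0) (𝓝 0) := by
      simpa using ((continuous_const_mul A).tendsto 0).mono_left nhdsWithin_le_nhds
    have := ge_of_tendsto hlim (eventually_of_mem (Ioo_mem_nhdsGT ht) key)
    linarith
  rw [one_div]
  exact (le_inv_comm₀ (by positivity) hwt).mp hAt

end Riccati

theorem stmt_19_general
    (T : ℝ)
    (y y' h : ℝ → ℝ) (A : ℝ) (hA : 0 < A)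
    (hy_deriv : ∀ t ∈ Set.Ioo (0:ℝ) T, HasDerivAt y (y' t) t)
    (hh_nonneg : ∀ t ∈ Set.Ioo (0:ℝ) T, 0 ≤ h t)
    (hh_cont : ContinuousOn h (Set.Ioo 0 T))
    (hh_int : IntegrableOn h (Set.Ioo 0 T))
    (hmain : ∀ t ∈ Set.Ioo (0:ℝ) T, y' t + A * (max (y t) 0) ^ 2 ≤ h t) :
    ∀ t ∈ Set.Ioo (0:ℝ) T, y t ≤ 1 / (A * t) + ∫ s in Set.Ioc (0:ℝ) t, h s := by
  rintro t ⟨ht0, htT⟩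
  have hsub : Ioc 0 t ⊆ Ioo 0 T := fun s hs ↦ ⟨hs.1, hs.2.trans_lt htT⟩
  have hH_eq : ∀ s ∈ Ioc 0 t, ∫ x in (0)..s, h x = ∫ x in Ioc 0 s, h x := fun s hs ↦
    intervalIntegral.integral_of_le hs.1.le
  have hH_nonneg : ∀ s ∈ Ioc 0 t, 0 ≤ ∫ x in (0)..s, h x := fun s hs ↦ by
    rw [hH_eq s hs]
    exact setIntegral_nonneg measurableSet_Ioc fun x hx ↦ hh_nonneg x (hsub ⟨hx.1, hx.2.trans hs.2⟩)
  have hH_deriv : ∀ s ∈ Ioc 0 t, HasDerivAt (fun s ↦ ∫ x in (0)..s, h x) (h s) s := fun s hs ↦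
    intervalIntegral.integral_hasDerivAt_right
      ((intervalIntegrable_iff_integrableOn_Ioc_of_le hs.1.le).2
        (hh_int.mono_set fun x hx ↦ hsub ⟨hx.1, hx.2.trans hs.2⟩))
      (hh_cont.stronglyMeasurableAtFilter isOpen_Ioo s (hsub hs))
      (hh_cont.continuousAt (isOpen_Ioo.mem_nhds (hsub hs)))
  have hw := le_one_div_mul_of_hasDerivAt_add_sq_nonpos
    (w := fun s ↦ y s - ∫ x in (0)..s, h x) (w' := fun s ↦ y' s - h s) hA ht0
    (fun s hs ↦ (hy_deriv s (hsub hs)).sub (hH_deriv s hs)) fun s hs ↦ by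
      have hmax : max (y s - ∫ x in (0)..s, h x) 0 ^ 2 ≤ max (y s) 0 ^ 2 := by
        gcongr; linarith [hH_nonneg s hs]
      nlinarith [hmain s (hsub hs)]
  rw [hH_eq t ⟨ht0, le_rfl⟩] at hw
  linarith

/-- ODE comparison lemma (Lemma 8.4 / `lem834`): if `y' + a·(y)₊² ≤ h` on `(0,T)`
with `a > 0` and `h` nonnegative, continuous and integrable on `(0,T)`, then
`y(t) ≤ 1/(a t) + ∫₀ᵗ h` on `(0,T)`. -/
theorem stmt_19
    (T : ℝ) (hT : 0 < T)
    (y y' h : ℝ → ℝ) (A : ℝ) (hA : 0 < A)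
    (hy_cont : ContinuousOn y (Set.Ico 0 T))
    (hy_deriv : ∀ t ∈ Set.Ioo (0:ℝ) T, HasDerivAt y (y' t) t)
    (hy'_cont : ContinuousOn y' (Set.Ioo 0 T))
    (hh_nonneg : ∀ t ∈ Set.Ioo (0:ℝ) T, 0 ≤ h t)
    (hh_cont : ContinuousOn h (Set.Ioo 0 T))
    (hh_int : IntegrableOn h (Set.Ioo 0 T))
    (hmain : ∀ t ∈ Set.Ioo (0:ℝ) T, y' t + A * (max (y t) 0) ^ 2 ≤ h t) :
    ∀ t ∈ Set.Ioo (0:ℝ) T, y t ≤ 1 / (A * t) + ∫ s in Set.Ioc (0:ℝ) t, h s :=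
  stmt_19_general T y y' h A hA hy_deriv hh_nonneg hh_cont hh_int hmain
end
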